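/- arXiv:2003.03523 — 9 statements merged into one kernel-verified Lean document; each statement's English description precedes it below -/
import Mathlib

section
/- Fix an integer k ≥ 0. Let λ ∈ (0,1], let R ∈ ℝ^{n×n} be positive definite, let θ_0 ∈ ℝ^n, and for all i ≥ 0 let φ_i ∈ ℝ^{p×n} and y_i ∈ ℝ^p. Define P_0 := R^{-1} and, for all i ≥ 0, P_{i+1} := (1/λ)P_i − (1/λ)P_i φ_i^T (λ I_p + φ_i P_i φ_i^T)^{-1} φ_i P_i and θ_{i+1} := θ_i + P_{i+1} φ_i^T (y_i − φ_i θ_i). Then θ_{k+1} is the unique global minimizer over θ̂ ∈ ℝ^n of the cost J_k(θ̂). -/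
/-!
`J_k` is the quadratic `t ↦ tᵀ M_{k+1} t - 2 c_{k+1}ᵀ t + J_k 0`, where the information matrix
and vector obey `M_0 = R`, `M_{i+1} = λ M_i + φ_iᵀ φ_i` and `c_0 = R θ_0`,
`c_{i+1} = λ c_i + φ_iᵀ y_i`. The Woodbury identity shows that the `P` recursion gives
`P_i = M_i⁻¹`, so the `θ` recursion preserves the normal equations `M_i θ_i = c_i`.
Since `M_{k+1}` is positive definite, `θ_{k+1}` is the unique minimizer.
-/

open Matrix

/-- The RLS cost function `J_k` with forgetting factor `lam`,
regularization `R`, and initial estimate `θ0`. -/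
noncomputable def Jcost {n p : ℕ} (k : ℕ) (lam : ℝ) (R : Matrix (Fin n) (Fin n) ℝ)
    (θ0 : Fin n → ℝ) (φ : ℕ → Matrix (Fin p) (Fin n) ℝ) (y : ℕ → (Fin p → ℝ))
    (t : Fin n → ℝ) : ℝ :=
  (∑ i ∈ Finset.range (k + 1),
      lam ^ (k - i) * ((y i - φ i *ᵥ t) ⬝ᵥ (y i - φ i *ᵥ t)))
    + lam ^ (k + 1) * ((t - θ0) ⬝ᵥ (R *ᵥ (t - θ0)))

namespace RLS

section Quadratic

variable {K m l : Type*} [CommRing K] [Fintype m] [Fintype l]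

def quadratic (M : Matrix m m K) (c t : m → K) : K :=
  t ⬝ᵥ (M *ᵥ t) - 2 * (c ⬝ᵥ t)

@[simp]
lemma quadratic_zero (M : Matrix m m K) (c : m → K) : quadratic M c 0 = 0 := by
  simp [quadratic]

lemma quadratic_smul_add (a : K) (M N : Matrix m m K) (c d t : m → K) :
    quadratic (a • M + N) (a • c + d) t = a * quadratic M c t + quadratic N d t := by
  simp only [quadratic, add_mulVec, smul_mulVec, dotProduct_add, dotProduct_smul,
    add_dotProduct, smul_dotProduct, smul_eq_mul]
  ring

lemma dotProduct_sub_mulVec_self (A : Matrix l m K) (u : l → K) (t : m → K) :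
    (u - A *ᵥ t) ⬝ᵥ (u - A *ᵥ t) = quadratic (Aᵀ * A) (Aᵀ *ᵥ u) t + u ⬝ᵥ u := by
  have hquad : t ⬝ᵥ ((Aᵀ * A) *ᵥ t) = (A *ᵥ t) ⬝ᵥ (A *ᵥ t) := by
    rw [← mulVec_mulVec, dotProduct_mulVec, vecMul_transpose]
  have hlin : (Aᵀ *ᵥ u) ⬝ᵥ t = u ⬝ᵥ (A *ᵥ t) := by
    rw [mulVec_transpose, ← dotProduct_mulVec]
  rw [quadratic, dotProduct_sub, sub_dotProduct, sub_dotProduct, hquad, hlin,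
    dotProduct_comm (A *ᵥ t) u]
  ring

lemma dotProduct_sub_mulVec_sub {B : Matrix m m K} (hB : B.IsSymm) (s t : m → K) :
    (t - s) ⬝ᵥ (B *ᵥ (t - s)) = quadratic B (B *ᵥ s) t + s ⬝ᵥ (B *ᵥ s) := by
  have hsym : s ⬝ᵥ (B *ᵥ t) = (B *ᵥ s) ⬝ᵥ t := by
    rw [dotProduct_mulVec, ← vecMul_transpose, hB.eq]
  rw [quadratic, mulVec_sub, dotProduct_sub, sub_dotProduct, sub_dotProduct, hsym,
    dotProduct_comm t (B *ᵥ s)]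
  ring

lemma quadratic_sub_quadratic {M : Matrix m m K} (hM : M.IsSymm) {s c : m → K}
    (hs : M *ᵥ s = c) (t : m → K) :
    quadratic M c t - quadratic M c s = (t - s) ⬝ᵥ (M *ᵥ (t - s)) := by
  rw [dotProduct_sub_mulVec_sub hM]
  simp only [quadratic, hs, dotProduct_comm c s]
  ring

lemma weighted_step_eq_quadratic {f : (m → K) → K} {M : Matrix m m K} {c : m → K}
    (hf : ∀ t, f t = quadratic M c t + f 0) (a : K) (A : Matrix l m K) (u : l → K)
    (t : m → K) :
    a * f t + (u - A *ᵥ t) ⬝ᵥ (u - A *ᵥ t) =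
      quadratic (a • M + Aᵀ * A) (a • c + Aᵀ *ᵥ u) t +
        (a * f 0 + (u - A *ᵥ 0) ⬝ᵥ (u - A *ᵥ 0)) := by
  rw [quadratic_smul_add, hf t, dotProduct_sub_mulVec_self, dotProduct_sub_mulVec_self,
    quadratic_zero]
  ring

def infoMatrix (lam : K) (R : Matrix m m K) (φ : ℕ → Matrix l m K) : ℕ → Matrix m m K
  | 0 => R
  | i + 1 => lam • infoMatrix lam R φ i + (φ i)ᵀ * φ i

def infoVector (lam : K) (R : Matrix m m K) (θ0 : m → K) (φ : ℕ → Matrix l m K)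
    (y : ℕ → l → K) : ℕ → m → K
  | 0 => R *ᵥ θ0
  | i + 1 => lam • infoVector lam R θ0 φ y i + (φ i)ᵀ *ᵥ y i

lemma infoMatrix_mulVec_eq [DecidableEq m] {lam : K} {R : Matrix m m K} {θ0 : m → K}
    {φ : ℕ → Matrix l m K} {y : ℕ → l → K} {P : ℕ → Matrix m m K} {θ : ℕ → m → K}
    (hPM : ∀ i, P i * infoMatrix lam R φ i = 1) (hθ0 : θ 0 = θ0)
    (hθ : ∀ i, θ (i + 1) = θ i + (P (i + 1) * (φ i)ᵀ) *ᵥ (y i - φ i *ᵥ θ i)) (i : ℕ) :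
    infoMatrix lam R φ i *ᵥ θ i = infoVector lam R θ0 φ y i := by
  induction i with
  | zero => rw [hθ0]; rfl
  | succ i ih =>
    have hMP : infoMatrix lam R φ (i + 1) * P (i + 1) = 1 := mul_eq_one_comm.mp (hPM (i + 1))
    have hgain : infoMatrix lam R φ (i + 1) *ᵥ ((P (i + 1) * (φ i)ᵀ) *ᵥ (y i - φ i *ᵥ θ i))
        = (φ i)ᵀ *ᵥ (y i - φ i *ᵥ θ i) := by
      rw [mulVec_mulVec, ← Matrix.mul_assoc, hMP, Matrix.one_mul]
    rw [hθ i, mulVec_add, hgain, infoVector]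
    nth_rewrite 1 [infoMatrix]
    rw [add_mulVec, smul_mulVec, ih, ← mulVec_mulVec, mulVec_sub]
    abel

end Quadratic

section Covariance

variable {K m l : Type*} [Field K] [Fintype m] [Fintype l] [DecidableEq l]

noncomputable def covUpdate (lam : K) (A : Matrix l m K) (P : Matrix m m K) : Matrix m m K :=
  (1 / lam) • P - (1 / lam) • (P * Aᵀ * (lam • (1 : Matrix l l K) + A * P * Aᵀ)⁻¹ * (A * P))

-- The matrix inversion (Woodbury) lemma, verified directly as a left inverse.
lemma covUpdate_mul_eq_one [DecidableEq m] {lam : K} (hlam : lam ≠ 0) (A : Matrix l m K)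
    {P M : Matrix m m K} (hPM : P * M = 1) (hS : IsUnit (lam • (1 : Matrix l l K) + A * P * Aᵀ)) :
    covUpdate lam A P * (lam • M + Aᵀ * A) = 1 := by
  set S := lam • (1 : Matrix l l K) + A * P * Aᵀ
  have hSS : S⁻¹ * S = 1 := nonsing_inv_mul S ((isUnit_iff_isUnit_det S).mp hS)
  have hP : P * (lam • M + Aᵀ * A) = lam • 1 + P * Aᵀ * A := by
    rw [Matrix.mul_add, Matrix.mul_smul, hPM, ← Matrix.mul_assoc]
  have hAP : A * P * (lam • M + Aᵀ * A) = S * A := by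
    rw [Matrix.mul_add, Matrix.mul_smul, Matrix.mul_assoc A P M, hPM, Matrix.mul_one,
      Matrix.add_mul, Matrix.smul_mul, Matrix.one_mul]
    simp only [Matrix.mul_assoc]
  have hcorr : P * Aᵀ * S⁻¹ * (A * P) * (lam • M + Aᵀ * A) = P * Aᵀ * A := by
    rw [Matrix.mul_assoc _ (A * P), hAP, ← Matrix.mul_assoc, Matrix.mul_assoc (P * Aᵀ) S⁻¹ S,
      hSS, Matrix.mul_one, Matrix.mul_assoc]
  rw [covUpdate, Matrix.sub_mul, Matrix.smul_mul, Matrix.smul_mul, hP, hcorr, smul_add,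
    smul_smul, one_div, inv_mul_cancel₀ hlam, one_smul]
  abel

end Covariance

section Real

variable {m l : Type*} [Fintype m] [Fintype l]

lemma isUniqueMin_of_eq_quadratic {f : (m → ℝ) → ℝ} {M : Matrix m m ℝ} {c s : m → ℝ}
    (hf : ∀ t, f t = quadratic M c t + f 0) (hM : M.PosDef) (hs : M *ᵥ s = c) :
    (∀ t, f s ≤ f t) ∧ (∀ t, f t = f s → t = s) := by
  have hgap (t : m → ℝ) : f t - f s = (t - s) ⬝ᵥ (M *ᵥ (t - s)) := by
    rw [hf t, hf s, ← quadratic_sub_quadratic (isHermitian_iff_isSymm.mp hM.isHermitian) hs]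
    ring
  refine ⟨fun t => ?_, fun t hts => ?_⟩
  · have := hM.posSemidef.dotProduct_mulVec_nonneg (t - s)
    rw [star_trivial, ← hgap] at this
    linarith
  · by_contra hne
    have := hM.dotProduct_mulVec_pos (sub_ne_zero.mpr hne)
    rw [star_trivial, ← hgap, hts, sub_self] at this
    exact this.false

lemma posDef_infoMatrix {lam : ℝ} (hlam : 0 < lam) {R : Matrix m m ℝ} (hR : R.PosDef)
    (φ : ℕ → Matrix l m ℝ) (i : ℕ) : (infoMatrix lam R φ i).PosDef := by
  induction i with
  | zero => exact hR
  | succ i ih =>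
    have hφ : ((φ i)ᵀ * φ i).PosSemidef := by
      simpa only [conjTranspose_eq_transpose_of_trivial] using
        posSemidef_conjTranspose_mul_self (φ i)
    exact (ih.smul hlam).add_posSemidef hφ

lemma mul_infoMatrix_eq_one [DecidableEq m] [DecidableEq l] {lam : ℝ} (hlam : 0 < lam)
    {R : Matrix m m ℝ} (hR : R.PosDef)
    {φ : ℕ → Matrix l m ℝ} {P : ℕ → Matrix m m ℝ} (hP0 : P 0 = R⁻¹)
    (hP : ∀ i, P (i + 1) = covUpdate lam (φ i) (P i)) (i : ℕ) :
    P i * infoMatrix lam R φ i = 1 := by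
  induction i with
  | zero => exact hP0 ▸ nonsing_inv_mul R ((isUnit_iff_isUnit_det R).mp hR.isUnit)
  | succ i ih =>
    have hPi : (P i).PosDef := (inv_eq_left_inv ih).symm ▸ (posDef_infoMatrix hlam hR φ i).inv
    have hφPφ : (φ i * P i * (φ i)ᵀ).PosSemidef := by
      simpa only [conjTranspose_eq_transpose_of_trivial] using
        hPi.posSemidef.mul_mul_conjTranspose_same (φ i)
    have hS := ((PosDef.one.smul hlam).add_posSemidef hφPφ).isUnit
    rw [hP i]
    exact covUpdate_mul_eq_one hlam.ne' (φ i) ih hS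

end Real

section Cost

variable {n p : ℕ} (lam : ℝ) (R : Matrix (Fin n) (Fin n) ℝ) (θ0 : Fin n → ℝ)
  (φ : ℕ → Matrix (Fin p) (Fin n) ℝ) (y : ℕ → (Fin p → ℝ))

lemma Jcost_zero (t : Fin n → ℝ) :
    Jcost 0 lam R θ0 φ y t =
      lam * ((t - θ0) ⬝ᵥ (R *ᵥ (t - θ0))) + (y 0 - φ 0 *ᵥ t) ⬝ᵥ (y 0 - φ 0 *ᵥ t) := by
  simp only [Jcost, zero_add, Finset.sum_range_one, Nat.sub_self, pow_zero, one_mul, pow_one]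
  ring

lemma Jcost_succ (k : ℕ) (t : Fin n → ℝ) :
    Jcost (k + 1) lam R θ0 φ y t =
      lam * Jcost k lam R θ0 φ y t +
        (y (k + 1) - φ (k + 1) *ᵥ t) ⬝ᵥ (y (k + 1) - φ (k + 1) *ᵥ t) := by
  have hsum : ∑ i ∈ Finset.range (k + 1),
      lam ^ (k + 1 - i) * ((y i - φ i *ᵥ t) ⬝ᵥ (y i - φ i *ᵥ t))
      = lam * ∑ i ∈ Finset.range (k + 1),
          lam ^ (k - i) * ((y i - φ i *ᵥ t) ⬝ᵥ (y i - φ i *ᵥ t)) := by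
    rw [Finset.mul_sum]
    refine Finset.sum_congr rfl fun i hi => ?_
    rw [Nat.succ_sub (Finset.mem_range_succ_iff.mp hi), pow_succ]
    ring
  rw [Jcost, Finset.sum_range_succ, Nat.sub_self, pow_zero, one_mul, hsum, Jcost]
  ring

variable {R} in
lemma Jcost_eq_quadratic (hR : R.IsSymm) (k : ℕ) (t : Fin n → ℝ) :
    Jcost k lam R θ0 φ y t =
      quadratic (infoMatrix lam R φ (k + 1)) (infoVector lam R θ0 φ y (k + 1)) t +
        Jcost k lam R θ0 φ y 0 := by
  induction k generalizing t with
  | zero =>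
    have hreg (t : Fin n → ℝ) : (t - θ0) ⬝ᵥ (R *ᵥ (t - θ0)) =
        quadratic R (R *ᵥ θ0) t + (0 - θ0) ⬝ᵥ (R *ᵥ (0 - θ0)) := by
      rw [dotProduct_sub_mulVec_sub hR, dotProduct_sub_mulVec_sub hR, quadratic_zero, zero_add]
    rw [Jcost_zero, Jcost_zero, weighted_step_eq_quadratic hreg]
    rfl
  | succ k ih =>
    rw [Jcost_succ, Jcost_succ, weighted_step_eq_quadratic ih]
    rfl

end Cost

end RLS

open RLS in
theorem stmt0 {n p : ℕ} (k : ℕ) (lam : ℝ) (hlam : lam ∈ Set.Ioc (0 : ℝ) 1)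
    (R : Matrix (Fin n) (Fin n) ℝ) (hR : R.PosDef)
    (θ0 : Fin n → ℝ) (φ : ℕ → Matrix (Fin p) (Fin n) ℝ) (y : ℕ → (Fin p → ℝ))
    (P : ℕ → Matrix (Fin n) (Fin n) ℝ) (θ : ℕ → (Fin n → ℝ))
    (hP0 : P 0 = R⁻¹) (hθ0 : θ 0 = θ0)
    (hP : ∀ i, P (i + 1) =
      (1 / lam) • P i -
      (1 / lam) • (P i * (φ i)ᵀ *
        (lam • (1 : Matrix (Fin p) (Fin p) ℝ) + φ i * P i * (φ i)ᵀ)⁻¹ * (φ i * P i)))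
    (hθ : ∀ i, θ (i + 1) = θ i + (P (i + 1) * (φ i)ᵀ) *ᵥ (y i - φ i *ᵥ θ i)) :
    (∀ t, Jcost k lam R θ0 φ y (θ (k + 1)) ≤ Jcost k lam R θ0 φ y t) ∧
    (∀ t, Jcost k lam R θ0 φ y t = Jcost k lam R θ0 φ y (θ (k + 1)) → t = θ (k + 1)) := by
  have hlam0 : 0 < lam := hlam.1
  have hPM : ∀ i, P i * infoMatrix lam R φ i = 1 := mul_infoMatrix_eq_one hlam0 hR hP0 hP
  have hRsymm : R.IsSymm := isHermitian_iff_isSymm.mp hR.isHermitian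
  exact isUniqueMin_of_eq_quadratic (Jcost_eq_quadratic lam θ0 φ y hRsymm k)
    (posDef_infoMatrix hlam0 hR φ (k + 1)) (infoMatrix_mulVec_eq hPM hθ0 hθ (k + 1))
end

section
/- Fix an integer k ≥ 0. Let λ ∈ (0,1], let R ∈ ℝ^{n×n} be positive definite, let θ_0 ∈ ℝ^n, and for all i ≥ 0 let φ_i ∈ ℝ^{p×n} and y_i ∈ ℝ^p. Define P_0 := R^{-1} and, for all i ≥ 0, θ_{i+1} := θ_i + P_i φ_i^T (λ I_p + φ_i P_i φ_i^T)^{-1} (y_i − φ_i θ_i) and P_{i+1} := (1/λ)P_i − (1/λ)P_i φ_i^T (λ I_p + φ_i P_i φ_i^T)^{-1} φ_i P_i (where θ_{i+1} is computed using P_i, before P_i is updated). Then θ_{k+1} is the unique global minimizer over θ̂ ∈ ℝ^n of the cost J_k(θ̂). -/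
/-!
With the information matrices `G₀ = R`, `Gᵢ₊₁ = λ Gᵢ + φᵢᵀ φᵢ` (positive definite) and the
moments `c₀ = R θ₀`, `cᵢ₊₁ = λ cᵢ + φᵢᵀ yᵢ`, the Woodbury identity shows `Pᵢ = Gᵢ⁻¹`, and then
the estimate update preserves the normal equations `Gᵢ θᵢ = cᵢ`. Since `J_k` is the quadratic
`t ↦ tᵀ G_{k+1} t - 2 c_{k+1}ᵀ t` up to a constant, completing the square gives
`J_k t = J_k θ_{k+1} + (t - θ_{k+1})ᵀ G_{k+1} (t - θ_{k+1})`.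
-/

open Matrix

section Expansion

variable {m q K : Type*} [Fintype m] [Fintype q] [CommRing K]

def HasQuadExpansion (G : Matrix m m K) (c : m → K) (F : (m → K) → K) : Prop :=
  ∀ t, F t = F 0 + (t ⬝ᵥ (G *ᵥ t) - 2 * (c ⬝ᵥ t))

lemma sub_dotProduct_mulVec_sub {A : Matrix m m K} (hA : A.IsSymm) (s t : m → K) :
    (t - s) ⬝ᵥ (A *ᵥ (t - s)) = t ⬝ᵥ (A *ᵥ t) - 2 * ((A *ᵥ s) ⬝ᵥ t) + s ⬝ᵥ (A *ᵥ s) := by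
  have hsym : s ⬝ᵥ (A *ᵥ t) = (A *ᵥ s) ⬝ᵥ t := by
    rw [dotProduct_mulVec, ← mulVec_transpose, hA.eq]
  rw [mulVec_sub, dotProduct_sub, sub_dotProduct, sub_dotProduct, hsym,
    dotProduct_comm t (A *ᵥ s)]
  ring

lemma sub_mulVec_dotProduct_self (Φ : Matrix q m K) (u : q → K) (t : m → K) :
    (u - Φ *ᵥ t) ⬝ᵥ (u - Φ *ᵥ t)
      = u ⬝ᵥ u + (t ⬝ᵥ ((Φᵀ * Φ) *ᵥ t) - 2 * ((Φᵀ *ᵥ u) ⬝ᵥ t)) := by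
  have hcross : u ⬝ᵥ (Φ *ᵥ t) = (Φᵀ *ᵥ u) ⬝ᵥ t := by
    rw [dotProduct_mulVec, mulVec_transpose]
  have hsq : (Φ *ᵥ t) ⬝ᵥ (Φ *ᵥ t) = t ⬝ᵥ ((Φᵀ * Φ) *ᵥ t) := by
    rw [← mulVec_mulVec, dotProduct_mulVec, mulVec_transpose, dotProduct_comm]
  rw [dotProduct_sub, sub_dotProduct, sub_dotProduct, hcross, dotProduct_comm (Φ *ᵥ t) u,
    hcross, hsq]
  ring

lemma hasQuadExpansion_sub_dotProduct_mulVec_sub {A : Matrix m m K} (hA : A.IsSymm)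
    (s : m → K) :
    HasQuadExpansion A (A *ᵥ s) (fun t ↦ (t - s) ⬝ᵥ (A *ᵥ (t - s))) := by
  intro t
  simp only [sub_dotProduct_mulVec_sub hA s t, sub_dotProduct_mulVec_sub hA s 0, mulVec_zero,
    dotProduct_zero]
  ring

lemma HasQuadExpansion.discount_add_residual {G : Matrix m m K} {c : m → K}
    {F F' : (m → K) → K} (hF : HasQuadExpansion G c F) (lam : K) (Φ : Matrix q m K) (u : q → K)
    (hF' : ∀ t, F' t = lam * F t + (u - Φ *ᵥ t) ⬝ᵥ (u - Φ *ᵥ t)) :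
    HasQuadExpansion (lam • G + Φᵀ * Φ) (lam • c + Φᵀ *ᵥ u) F' := by
  intro t
  rw [hF' t, hF' 0, hF t, sub_mulVec_dotProduct_self, sub_mulVec_dotProduct_self]
  simp only [add_mulVec, smul_mulVec, dotProduct_add, dotProduct_smul, add_dotProduct,
    smul_dotProduct, smul_eq_mul, dotProduct_zero, mulVec_zero]
  ring

lemma HasQuadExpansion.eq_add_of_mulVec_eq {G : Matrix m m K} {c s : m → K}
    {F : (m → K) → K} (hF : HasQuadExpansion G c F) (hG : G.IsSymm) (hs : G *ᵥ s = c)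
    (t : m → K) : F t = F s + (t - s) ⬝ᵥ (G *ᵥ (t - s)) := by
  rw [hF t, hF s, sub_dotProduct_mulVec_sub hG, hs, dotProduct_comm c s]
  ring

end Expansion

lemma HasQuadExpansion.isUniqueMin_of_mulVec_eq {m : Type*} [Fintype m] {G : Matrix m m ℝ}
    {c s : m → ℝ} {F : (m → ℝ) → ℝ} (hF : HasQuadExpansion G c F) (hG : G.PosDef)
    (hs : G *ᵥ s = c) :
    (∀ t, F s ≤ F t) ∧ (∀ t, F t = F s → t = s) := by
  have hF' := hF.eq_add_of_mulVec_eq (isHermitian_iff_isSymm.mp hG.isHermitian) hs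
  refine ⟨fun t ↦ ?_, fun t ht ↦ ?_⟩
  · have hnonneg := hG.posSemidef.dotProduct_mulVec_nonneg (t - s)
    rw [star_trivial] at hnonneg
    linarith [hF' t]
  · by_contra hne
    have hpos := hG.dotProduct_mulVec_pos (sub_ne_zero.mpr hne)
    rw [star_trivial] at hpos
    linarith [hF' t]

section Recursion

variable {m q K : Type*} [Fintype m] [Fintype q] [DecidableEq m] [DecidableEq q] [Field K]

lemma Matrix.inv_smul_of_ne_zero {c : K} (hc : c ≠ 0) (A : Matrix m m K) :
    (c • A)⁻¹ = c⁻¹ • A⁻¹ := by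
  let := invertibleOfNonzero hc
  by_cases hA : IsUnit A.det
  · rw [inv_smul _ _ hA, invOf_eq_inv]
  · have hcA : ¬IsUnit (c • A).det := by
      rwa [det_smul, IsUnit.mul_iff, not_and_or, or_iff_right (not_not.mpr (hc.isUnit.pow _))]
    rw [nonsing_inv_apply_not_isUnit _ hA, nonsing_inv_apply_not_isUnit _ hcA, smul_zero]

lemma smul_inv_add_transpose_mul_mul_gain {lam : K} {P : Matrix m m K} (hP : IsUnit P)
    (Φ : Matrix q m K) (hS : IsUnit (lam • (1 : Matrix q q K) + Φ * P * Φᵀ)) :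
    (lam • P⁻¹ + Φᵀ * Φ) * (P * Φᵀ * (lam • (1 : Matrix q q K) + Φ * P * Φᵀ)⁻¹) = Φᵀ := by
  set S := lam • (1 : Matrix q q K) + Φ * P * Φᵀ
  have hPP : P⁻¹ * P = 1 := nonsing_inv_mul P ((isUnit_iff_isUnit_det P).mp hP)
  have hSS : S * S⁻¹ = 1 := mul_nonsing_inv S ((isUnit_iff_isUnit_det S).mp hS)
  have hpush : (lam • P⁻¹ + Φᵀ * Φ) * P * Φᵀ = Φᵀ * S := by
    simp only [S, Matrix.add_mul, Matrix.mul_add, Matrix.smul_mul, Matrix.mul_smul, hPP,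
      Matrix.one_mul, Matrix.mul_one, Matrix.mul_assoc]
  rw [← Matrix.mul_assoc, ← Matrix.mul_assoc, hpush, Matrix.mul_assoc, hSS, Matrix.mul_one]

lemma inv_smul_inv_add_transpose_mul {lam : K} (hlam : lam ≠ 0) {P : Matrix m m K}
    (hP : IsUnit P) (Φ : Matrix q m K)
    (hS : IsUnit (lam • (1 : Matrix q q K) + Φ * P * Φᵀ)) :
    (lam • P⁻¹ + Φᵀ * Φ)⁻¹ = (1 / lam) • P -
      (1 / lam) • (P * Φᵀ * (lam • (1 : Matrix q q K) + Φ * P * Φᵀ)⁻¹ * (Φ * P)) := by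
  have hPinv : P⁻¹⁻¹ = P := nonsing_inv_nonsing_inv P ((isUnit_iff_isUnit_det P).mp hP)
  have hC : ((lam⁻¹ • 1 : Matrix q q K))⁻¹ = lam • 1 := by
    rw [inv_smul_of_ne_zero (inv_ne_zero hlam), inv_inv, inv_one]
  have hsplit : lam • P⁻¹ + Φᵀ * Φ = lam • (P⁻¹ + Φᵀ * (lam⁻¹ • (1 : Matrix q q K)) * Φ) := by
    rw [smul_add, Matrix.mul_smul, Matrix.smul_mul, smul_smul, mul_inv_cancel₀ hlam]
    simp
  rw [hsplit, inv_smul_of_ne_zero hlam,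
    add_mul_mul_inv_eq_sub _ _ _ _ (isUnit_nonsing_inv_iff.mpr hP)
      (by rw [isUnit_iff_isUnit_det]; simp [hlam]) (by rwa [hC, hPinv]),
    hC, hPinv, smul_sub, one_div, Matrix.mul_assoc _ Φ P]

end Recursion

section Gram

variable {m q K : Type*} [Fintype q] [CommRing K]

def rlsGram (lam : K) (R : Matrix m m K) (φ : ℕ → Matrix q m K) : ℕ → Matrix m m K
  | 0 => R
  | i + 1 => lam • rlsGram lam R φ i + (φ i)ᵀ * φ i

def rlsMoment [Fintype m] (lam : K) (R : Matrix m m K) (θ0 : m → K) (φ : ℕ → Matrix q m K)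
    (y : ℕ → q → K) : ℕ → m → K
  | 0 => R *ᵥ θ0
  | i + 1 => lam • rlsMoment lam R θ0 φ y i + (φ i)ᵀ *ᵥ y i

end Gram

lemma posDef_smul_one_add_mul_mul_transpose {m q : Type*} [Fintype m] [Fintype q]
    [DecidableEq q] {lam : ℝ} (hlam : 0 < lam) {M : Matrix m m ℝ} (hM : M.PosSemidef)
    (Φ : Matrix q m ℝ) : (lam • (1 : Matrix q q ℝ) + Φ * M * Φᵀ).PosDef := by
  simpa [conjTranspose_eq_transpose_of_trivial] using
    (PosDef.one.smul hlam).add_posSemidef (hM.mul_mul_conjTranspose_same Φ)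

section Estimator

variable {m q : Type*} [Fintype m] [Fintype q] {lam : ℝ} {R : Matrix m m ℝ}
  {φ : ℕ → Matrix q m ℝ}

lemma rlsGram_posDef (hlam : 0 < lam) (hR : R.PosDef) (i : ℕ) :
    (rlsGram lam R φ i).PosDef := by
  induction i with
  | zero => exact hR
  | succ i ih =>
    rw [rlsGram]
    simpa [conjTranspose_eq_transpose_of_trivial] using
      (ih.smul hlam).add_posSemidef (posSemidef_conjTranspose_mul_self (φ i))

variable [DecidableEq m] [DecidableEq q] {θ0 : m → ℝ} {y : ℕ → q → ℝ}
  {P : ℕ → Matrix m m ℝ} {θ : ℕ → m → ℝ}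

lemma rls_covariance_eq_inv_rlsGram (hlam : 0 < lam) (hR : R.PosDef) (hP0 : P 0 = R⁻¹)
    (hP : ∀ i, P (i + 1) =
      (1 / lam) • P i -
      (1 / lam) • (P i * (φ i)ᵀ *
        (lam • (1 : Matrix q q ℝ) + φ i * P i * (φ i)ᵀ)⁻¹ * (φ i * P i)))
    (i : ℕ) : P i = (rlsGram lam R φ i)⁻¹ := by
  induction i with
  | zero => exact hP0
  | succ i ih =>
    have hG := rlsGram_posDef (φ := φ) hlam hR i
    have hPi : (P i).PosDef := ih ▸ hG.inv
    have hGi : rlsGram lam R φ (i + 1) = lam • (P i)⁻¹ + (φ i)ᵀ * φ i := by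
      rw [rlsGram, ih, nonsing_inv_nonsing_inv _ ((isUnit_iff_isUnit_det _).mp hG.isUnit)]
    rw [hP i, hGi, inv_smul_inv_add_transpose_mul hlam.ne' hPi.isUnit (φ i)
      (posDef_smul_one_add_mul_mul_transpose hlam hPi.posSemidef (φ i)).isUnit]

lemma rlsGram_mulVec_eq_rlsMoment (hlam : 0 < lam) (hR : R.PosDef) (hθ0 : θ 0 = θ0)
    (hθ : ∀ i, θ (i + 1) = θ i +
      (P i * (φ i)ᵀ *
        (lam • (1 : Matrix q q ℝ) + φ i * P i * (φ i)ᵀ)⁻¹) *ᵥ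
        (y i - φ i *ᵥ θ i))
    (hPG : ∀ i, P i = (rlsGram lam R φ i)⁻¹) (i : ℕ) :
    rlsGram lam R φ i *ᵥ θ i = rlsMoment lam R θ0 φ y i := by
  induction i with
  | zero => rw [hθ0]; rfl
  | succ i ih =>
    have hG := rlsGram_posDef (φ := φ) hlam hR i
    have hPi : (P i).PosDef := hPG i ▸ hG.inv
    have hGP : (P i)⁻¹ = rlsGram lam R φ i := by
      rw [hPG, nonsing_inv_nonsing_inv _ ((isUnit_iff_isUnit_det _).mp hG.isUnit)]
    have hgain : rlsGram lam R φ (i + 1) *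
        (P i * (φ i)ᵀ * (lam • (1 : Matrix q q ℝ) + φ i * P i * (φ i)ᵀ)⁻¹) = (φ i)ᵀ := by
      rw [rlsGram, ← hGP]
      exact smul_inv_add_transpose_mul_mul_gain hPi.isUnit (φ i)
        (posDef_smul_one_add_mul_mul_transpose hlam hPi.posSemidef (φ i)).isUnit
    rw [hθ i, mulVec_add, mulVec_mulVec, hgain, rlsGram, add_mulVec, smul_mulVec, ih,
      mulVec_sub, ← mulVec_mulVec, rlsMoment]
    abel

end Estimator

section Cost

variable {n p : ℕ} (lam : ℝ) (R : Matrix (Fin n) (Fin n) ℝ) (θ0 : Fin n → ℝ)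
  (φ : ℕ → Matrix (Fin p) (Fin n) ℝ) (y : ℕ → (Fin p → ℝ))

lemma Jcost_zero (t : Fin n → ℝ) :
    Jcost 0 lam R θ0 φ y t =
      lam * ((t - θ0) ⬝ᵥ (R *ᵥ (t - θ0))) + (y 0 - φ 0 *ᵥ t) ⬝ᵥ (y 0 - φ 0 *ᵥ t) := by
  simp only [Jcost, zero_add, Finset.sum_range_one, pow_one]
  ring

lemma Jcost_succ (k : ℕ) (t : Fin n → ℝ) :
    Jcost (k + 1) lam R θ0 φ y t = lam * Jcost k lam R θ0 φ y t +
      (y (k + 1) - φ (k + 1) *ᵥ t) ⬝ᵥ (y (k + 1) - φ (k + 1) *ᵥ t) := by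
  have hdiscount : ∀ i ∈ Finset.range (k + 1), lam ^ (k + 1 - i) = lam * lam ^ (k - i) :=
    fun i hi ↦ by rw [Nat.sub_add_comm (Finset.mem_range_succ_iff.mp hi), pow_succ']
  simp only [Jcost, Finset.sum_range_succ _ (k + 1), Nat.sub_self, pow_zero, one_mul]
  rw [Finset.sum_congr rfl fun i hi ↦ by rw [hdiscount i hi, mul_assoc], ← Finset.mul_sum]
  ring

lemma hasQuadExpansion_Jcost (hR : R.IsSymm) (k : ℕ) :
    HasQuadExpansion (rlsGram lam R φ (k + 1)) (rlsMoment lam R θ0 φ y (k + 1))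
      (Jcost k lam R θ0 φ y) := by
  induction k with
  | zero =>
    exact (hasQuadExpansion_sub_dotProduct_mulVec_sub hR θ0).discount_add_residual lam (φ 0)
      (y 0) (Jcost_zero lam R θ0 φ y)
  | succ k ih =>
    exact ih.discount_add_residual lam (φ (k + 1)) (y (k + 1)) (Jcost_succ lam R θ0 φ y k)

end Cost

theorem stmt1 {n p : ℕ} (k : ℕ) (lam : ℝ) (hlam : lam ∈ Set.Ioc (0 : ℝ) 1)
    (R : Matrix (Fin n) (Fin n) ℝ) (hR : R.PosDef)
    (θ0 : Fin n → ℝ) (φ : ℕ → Matrix (Fin p) (Fin n) ℝ) (y : ℕ → (Fin p → ℝ))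
    (P : ℕ → Matrix (Fin n) (Fin n) ℝ) (θ : ℕ → (Fin n → ℝ))
    (hP0 : P 0 = R⁻¹) (hθ0 : θ 0 = θ0)
    (hθ : ∀ i, θ (i + 1) = θ i +
      (P i * (φ i)ᵀ *
        (lam • (1 : Matrix (Fin p) (Fin p) ℝ) + φ i * P i * (φ i)ᵀ)⁻¹) *ᵥ
        (y i - φ i *ᵥ θ i))
    (hP : ∀ i, P (i + 1) =
      (1 / lam) • P i -
      (1 / lam) • (P i * (φ i)ᵀ *
        (lam • (1 : Matrix (Fin p) (Fin p) ℝ) + φ i * P i * (φ i)ᵀ)⁻¹ * (φ i * P i))) :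
    (∀ t, Jcost k lam R θ0 φ y (θ (k + 1)) ≤ Jcost k lam R θ0 φ y t) ∧
    (∀ t, Jcost k lam R θ0 φ y t = Jcost k lam R θ0 φ y (θ (k + 1)) → t = θ (k + 1)) := by
  have hlam₀ : 0 < lam := hlam.1
  have hPG := rls_covariance_eq_inv_rlsGram hlam₀ hR hP0 hP
  have hnormal := rlsGram_mulVec_eq_rlsMoment hlam₀ hR hθ0 hθ hPG (k + 1)
  exact (hasQuadExpansion_Jcost lam R θ0 φ y (isHermitian_iff_isSymm.mp hR.isHermitian) k
    ).isUniqueMin_of_mulVec_eq (rlsGram_posDef hlam₀ hR (k + 1)) hnormal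
end

section
/- Let (φ_k)_{k=0}^∞ ⊂ ℝ^{p×n} be persistently exciting with constants N, α, β as in the definition, let R ∈ ℝ^{n×n} be positive definite, set P_0 := R^{-1}, let λ = 1, and let (P_k)_{k=0}^∞ satisfy the RLS covariance recursion P_{k+1}^{-1} = P_k^{-1} + φ_k^T φ_k. Then for all k ≥ N+1, ⌊k/(N+1)⌋·α·I_n + P_0^{-1} ≤ P_k^{-1} ≤ ⌈k/(N+1)⌉·β·I_n + P_0^{-1} in the Loewner order. Consequently, P_k → 0 as k → ∞. -/
/-!
Telescoping the recursion gives `(P k)⁻¹ = (P 0)⁻¹ + ∑_{i<k} φᵢᵀ φᵢ`. The first `⌊k/(N+1)⌋ (N+1)`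
terms of this sum split into `⌊k/(N+1)⌋` windows of length `N+1`, each at least `α I`, and the
remaining terms are positive semidefinite; symmetrically the first `⌈k/(N+1)⌉ (N+1)` terms cover
the sum and are at most `⌈k/(N+1)⌉ β I`. Finally, `Q ≥ c I` gives `c ‖x‖² ≤ ⟪x, Q x⟫ ≤ ‖x‖ ‖Q x‖`,
so `‖Q⁻¹‖ ≤ c⁻¹`; with `Q = (P k)⁻¹` and `c = ⌊k/(N+1)⌋ α → ∞` this forces `P k → 0`.
-/

open Finset Matrix Filter
open scoped MatrixOrder RealInnerProductSpace

theorem Finset.sum_range_mul_succ {M : Type*} [AddCommMonoid M] (f : ℕ → M) (N m : ℕ) :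
    ∑ i ∈ range ((m + 1) * (N + 1)), f i =
      ∑ i ∈ range (m * (N + 1)), f i + ∑ i ∈ Icc (m * (N + 1)) (m * (N + 1) + N), f i := by
  rw [range_eq_Ico, range_eq_Ico, ← Ico_add_one_right_eq_Icc,
    sum_Ico_consecutive _ (Nat.zero_le _) (by lia)]
  congr 2
  ring

section WindowSums

variable {M : Type*} [AddCommMonoid M] [PartialOrder M] [IsOrderedAddMonoid M]
  {f : ℕ → M} {N : ℕ} {a b : M}

theorem nsmul_le_sum_range_mul (h : ∀ j, a ≤ ∑ i ∈ Icc j (j + N), f i) (m : ℕ) :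
    m • a ≤ ∑ i ∈ range (m * (N + 1)), f i := by
  induction m with
  | zero => simp
  | succ m ih => rw [succ_nsmul, sum_range_mul_succ]; exact add_le_add ih (h _)

theorem sum_range_mul_le_nsmul (h : ∀ j, ∑ i ∈ Icc j (j + N), f i ≤ b) (m : ℕ) :
    ∑ i ∈ range (m * (N + 1)), f i ≤ m • b := by
  induction m with
  | zero => simp
  | succ m ih => rw [succ_nsmul, sum_range_mul_succ]; exact add_le_add ih (h _)

theorem floor_nsmul_le_sum_range (hf : ∀ i, 0 ≤ f i) (h : ∀ j, a ≤ ∑ i ∈ Icc j (j + N), f i)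
    (k : ℕ) : ⌊(k : ℝ) / (N + 1)⌋₊ • a ≤ ∑ i ∈ range k, f i := by
  have hk : ⌊(k : ℝ) / (N + 1)⌋₊ * (N + 1) ≤ k := by
    rw [← Nat.cast_succ, Nat.floor_div_eq_div]
    exact Nat.div_mul_le_self k (N + 1)
  exact (nsmul_le_sum_range_mul h _).trans
    (sum_le_sum_of_subset_of_nonneg (range_subset_range.2 hk) fun i _ _ ↦ hf i)

theorem sum_range_le_ceil_nsmul (hf : ∀ i, 0 ≤ f i) (h : ∀ j, ∑ i ∈ Icc j (j + N), f i ≤ b)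
    (k : ℕ) : ∑ i ∈ range k, f i ≤ ⌈(k : ℝ) / (N + 1)⌉₊ • b := by
  have hk : k ≤ ⌈(k : ℝ) / (N + 1)⌉₊ * (N + 1) := by
    have := Nat.le_ceil ((k : ℝ) / (N + 1))
    rw [div_le_iff₀ (by positivity)] at this
    exact_mod_cast this
  exact (sum_le_sum_of_subset_of_nonneg (range_subset_range.2 hk) fun i _ _ ↦ hf i).trans
    (sum_range_mul_le_nsmul h _)

end WindowSums

section Loewner

variable {ι : Type*} [Fintype ι] [DecidableEq ι]

theorem Matrix.mul_norm_le_norm_toEuclideanCLM {Q : Matrix ι ι ℝ} {c : ℝ} (hQ : c • 1 ≤ Q)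
    (x : EuclideanSpace ℝ ι) : c * ‖x‖ ≤ ‖toEuclideanCLM (𝕜 := ℝ) Q x‖ := by
  have hquad : c * ‖x‖ ^ 2 ≤ ⟪x, toEuclideanCLM (𝕜 := ℝ) Q x⟫ := by
    have := (le_iff.1 hQ).dotProduct_mulVec_nonneg x.ofLp
    simp only [sub_mulVec, smul_mulVec, one_mulVec, dotProduct_sub, dotProduct_smul,
      star_trivial, smul_eq_mul, sub_nonneg] at this
    rw [inner_toEuclideanCLM, ← real_inner_self_eq_norm_sq, EuclideanSpace.inner_eq_star_dotProduct]
    simpa using this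
  rcases (norm_nonneg x).eq_or_lt with hx | hx
  · simp [← hx]
  · nlinarith [hquad.trans (real_inner_le_norm _ _)]

open scoped Matrix.Norms.L2Operator

theorem Matrix.l2_opNorm_inv_le {Q : Matrix ι ι ℝ} (hQ : IsUnit Q) {c : ℝ} (hc : 0 < c)
    (hcQ : c • 1 ≤ Q) : ‖Q⁻¹‖ ≤ c⁻¹ := by
  rw [cstar_norm_def]
  refine ContinuousLinearMap.opNorm_le_bound _ (by positivity) fun y ↦ ?_
  have hy : toEuclideanCLM (𝕜 := ℝ) Q (toEuclideanCLM (𝕜 := ℝ) Q⁻¹ y) = y := by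
    rw [← ContinuousLinearMap.comp_apply, ← ContinuousLinearMap.mul_def, ← map_mul,
      mul_nonsing_inv _ ((isUnit_iff_isUnit_det Q).1 hQ), map_one, one_apply_eq_self]
  have := mul_norm_le_norm_toEuclideanCLM hcQ (toEuclideanCLM (𝕜 := ℝ) Q⁻¹ y)
  rwa [hy, ← le_inv_mul_iff₀ hc] at this

theorem Matrix.tendsto_zero_of_smul_one_le_inv {P : ℕ → Matrix ι ι ℝ} (hP : ∀ k, (P k).PosDef)
    {c : ℕ → ℝ} (hc : Tendsto c atTop atTop) (hcP : ∀ᶠ k in atTop, c k • 1 ≤ (P k)⁻¹) :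
    Tendsto P atTop (nhds 0) := by
  refine tendsto_zero_iff_norm_tendsto_zero.2 <| squeeze_zero' (.of_forall fun _ ↦ norm_nonneg _)
    ?_ (tendsto_inv_atTop_zero.comp hc)
  filter_upwards [hcP, hc.eventually_gt_atTop 0] with k hk hck
  have := l2_opNorm_inv_le (hP k).inv.isUnit hck hk
  rwa [nonsing_inv_nonsing_inv _ ((isUnit_iff_isUnit_det _).1 (hP k).isUnit)] at this

end Loewner

theorem stmt5_general {n p : ℕ} (N : ℕ) (α β : ℝ) (hα : 0 < α)
    (φ : ℕ → Matrix (Fin p) (Fin n) ℝ)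
    (hPE : ∀ j : ℕ,
      ((∑ i ∈ Finset.Icc j (j + N), (φ i)ᵀ * φ i) -
        α • (1 : Matrix (Fin n) (Fin n) ℝ)).PosSemidef ∧
      (β • (1 : Matrix (Fin n) (Fin n) ℝ) -
        ∑ i ∈ Finset.Icc j (j + N), (φ i)ᵀ * φ i).PosSemidef)
    (P : ℕ → Matrix (Fin n) (Fin n) ℝ) (hPk : ∀ k, (P k).PosDef)
    (hrec : ∀ k, (P (k + 1))⁻¹ = (P k)⁻¹ + (φ k)ᵀ * φ k) :
    (∀ k, N + 1 ≤ k →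
      ((P k)⁻¹ -
        ((⌊(k : ℝ) / ((N : ℝ) + 1)⌋ : ℝ) * α) • (1 : Matrix (Fin n) (Fin n) ℝ) -
        (P 0)⁻¹).PosSemidef ∧
      (((⌈(k : ℝ) / ((N : ℝ) + 1)⌉ : ℝ) * β) • (1 : Matrix (Fin n) (Fin n) ℝ) +
        (P 0)⁻¹ - (P k)⁻¹).PosSemidef) ∧
    Filter.Tendsto P Filter.atTop (nhds 0) := by
  have hφ : ∀ i, 0 ≤ (φ i)ᵀ * φ i := fun i ↦
    nonneg_iff_posSemidef.2 (by simpa using posSemidef_conjTranspose_mul_self (φ i))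
  have hsum : ∀ k, (P k)⁻¹ = (P 0)⁻¹ + ∑ i ∈ range k, (φ i)ᵀ * φ i := fun k ↦ by
    simp [eq_sum_range_sub (fun k ↦ (P k)⁻¹) k, hrec]
  have hlow : ∀ k : ℕ, (⌊(k : ℝ) / (N + 1)⌋₊ * α) • 1 + (P 0)⁻¹ ≤ (P k)⁻¹ := fun k ↦ by
    rw [hsum k, add_comm (P 0)⁻¹, mul_smul, Nat.cast_smul_eq_nsmul]
    exact add_le_add (floor_nsmul_le_sum_range hφ (fun j ↦ le_iff.2 (hPE j).1) k) le_rfl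
  have hup : ∀ k : ℕ, (P k)⁻¹ ≤ (⌈(k : ℝ) / (N + 1)⌉₊ * β) • 1 + (P 0)⁻¹ := fun k ↦ by
    rw [hsum k, add_comm (P 0)⁻¹, mul_smul, Nat.cast_smul_eq_nsmul]
    exact add_le_add (sum_range_le_ceil_nsmul hφ (fun j ↦ le_iff.2 (hPE j).2) k) le_rfl
  refine ⟨fun k _ ↦ ⟨?_, ?_⟩, ?_⟩
  · rw [sub_sub, ← natCast_floor_eq_intCast_floor (by positivity)]
    exact le_iff.1 (hlow k)
  · rw [← natCast_ceil_eq_intCast_ceil (by positivity)]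
    exact le_iff.1 (hup k)
  · refine tendsto_zero_of_smul_one_le_inv hPk (c := fun k ↦ ⌊(k : ℝ) / (N + 1)⌋₊ * α) ?_
      (.of_forall fun k ↦ (le_add_of_nonneg_right (hPk 0).inv.posSemidef.nonneg).trans (hlow k))
    exact (tendsto_natCast_atTop_atTop.comp <| tendsto_nat_floor_atTop.comp <|
      tendsto_natCast_atTop_atTop.atTop_div_const (by positivity)).atTop_mul_const hα

theorem stmt5 {n p : ℕ} (N : ℕ) (α β : ℝ) (hα : 0 < α) (hβ : 0 < β)
    (hN : (n : ℝ) ≤ (N : ℝ) * (p : ℝ))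
    (φ : ℕ → Matrix (Fin p) (Fin n) ℝ)
    (hPE : ∀ j : ℕ,
      ((∑ i ∈ Finset.Icc j (j + N), (φ i)ᵀ * φ i) -
        α • (1 : Matrix (Fin n) (Fin n) ℝ)).PosSemidef ∧
      (β • (1 : Matrix (Fin n) (Fin n) ℝ) -
        ∑ i ∈ Finset.Icc j (j + N), (φ i)ᵀ * φ i).PosSemidef)
    (R : Matrix (Fin n) (Fin n) ℝ) (hR : R.PosDef)
    (P : ℕ → Matrix (Fin n) (Fin n) ℝ) (hP0 : P 0 = R⁻¹) (hPk : ∀ k, (P k).PosDef)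
    (hrec : ∀ k, (P (k + 1))⁻¹ = (P k)⁻¹ + (φ k)ᵀ * φ k) :
    (∀ k, N + 1 ≤ k →
      ((P k)⁻¹ -
        ((⌊(k : ℝ) / ((N : ℝ) + 1)⌋ : ℝ) * α) • (1 : Matrix (Fin n) (Fin n) ℝ) -
        (P 0)⁻¹).PosSemidef ∧
      (((⌈(k : ℝ) / ((N : ℝ) + 1)⌉ : ℝ) * β) • (1 : Matrix (Fin n) (Fin n) ℝ) +
        (P 0)⁻¹ - (P k)⁻¹).PosSemidef) ∧
    Filter.Tendsto P Filter.atTop (nhds 0) :=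
  stmt5_general N α β hα φ hPE P hPk hrec
end

section
/- Let (φ_k)_{k=0}^∞ ⊂ ℝ^{p×n} be persistently exciting with constants N, α, β as in the definition, let R ∈ ℝ^{n×n} be positive definite, set P_0 := R^{-1}, let λ ∈ (0,1), and let (P_k)_{k=0}^∞ satisfy the RLS covariance recursion P_{k+1}^{-1} = λ P_k^{-1} + φ_k^T φ_k. Then for all k ≥ N+1, (λ^N (1−λ) α / (1 − λ^{N+1}))·I_n ≤ P_k^{-1} ≤ (β / (1 − λ^{N+1}))·I_n + P_N^{-1} in the Loewner order. -/
/-!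
Write `Q k = (P k)⁻¹` and `A i = (φ i)ᵀ * φ i ≥ 0`. The recursion unrolls to
`Q (j + m) = λ ^ m • Q j + S j m` with the discounted sum
`S j m = ∑_{i<m} λ ^ (m - 1 - i) • A (j + i)`.

For the lower bound, every weight in `S j (N + 1)` is at least `λ ^ N`, so
`Q (j + N + 1) ≥ λ ^ N • ∑_{window} A ≥ λ ^ N α`, which dominates the stated constant since
`1 - λ ≤ 1 - λ ^ (N + 1)`.

For the upper bound, splitting off the last `N + 1` terms gives
`S j (m + N + 1) ≤ λ ^ (N + 1) • S j m + β`, so by strong induction `S j m` stays below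
`β / (1 - λ ^ (N + 1))`, the fixed point of `s ↦ λ ^ (N + 1) s + β`; and `λ ^ m • Q N ≤ Q N`.
-/

open Matrix Finset
open scoped MatrixOrder

theorem Finset.sum_Icc_add_eq_sum_range {M : Type*} [AddCommMonoid M] (f : ℕ → M) (j N : ℕ) :
    ∑ i ∈ Icc j (j + N), f i = ∑ i ∈ range (N + 1), f (j + i) := by
  rw [← Ico_add_one_right_eq_Icc, sum_Ico_eq_sum_range, add_assoc, Nat.add_sub_cancel_left]

section DiscountedSum

variable {R M : Type*} [Semiring R] [AddCommMonoid M] [Module R M]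

/-- `discountedSum lam A j m = ∑ i ∈ range m, lam ^ (m - 1 - i) • A (j + i)`. -/
def discountedSum (lam : R) (A : ℕ → M) (j : ℕ) : ℕ → M
  | 0 => 0
  | m + 1 => lam • discountedSum lam A j m + A (j + m)

variable (lam : R) (A : ℕ → M)

@[simp] lemma discountedSum_zero (j : ℕ) : discountedSum lam A j 0 = 0 := rfl

lemma discountedSum_succ (j m : ℕ) :
    discountedSum lam A j (m + 1) = lam • discountedSum lam A j m + A (j + m) := rfl

lemma discountedSum_add (j m l : ℕ) :
    discountedSum lam A j (m + l) =
      lam ^ l • discountedSum lam A j m + discountedSum lam A (j + m) l := by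
  induction l with
  | zero => simp
  | succ l ih =>
    rw [← add_assoc, discountedSum_succ, ih, discountedSum_succ, smul_add, smul_smul, ← pow_succ',
      add_assoc, add_assoc]

lemma eq_pow_smul_add_discountedSum {Q : ℕ → M} (hQ : ∀ k, Q (k + 1) = lam • Q k + A k)
    (j m : ℕ) : Q (j + m) = lam ^ m • Q j + discountedSum lam A j m := by
  induction m with
  | zero => simp
  | succ m ih =>
    rw [← add_assoc, hQ, ih, discountedSum_succ, smul_add, smul_smul, ← pow_succ', add_assoc]

end DiscountedSum

section Ordered

variable {𝕜 M : Type*} [Semiring 𝕜] [PartialOrder 𝕜]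
  [AddCommMonoid M] [PartialOrder M] [IsOrderedAddMonoid M] [Module 𝕜 M] [PosSMulMono 𝕜 M]
  {lam : 𝕜} {A : ℕ → M}

lemma discountedSum_nonneg (hlam : 0 ≤ lam) (hA : ∀ i, 0 ≤ A i) (j m : ℕ) :
    0 ≤ discountedSum lam A j m := by
  induction m with
  | zero => rfl
  | succ m ih => exact add_nonneg (smul_nonneg hlam ih) (hA _)

variable [SMulPosMono 𝕜 M]

lemma discountedSum_le_sum (hlam0 : 0 ≤ lam) (hlam1 : lam ≤ 1) (hA : ∀ i, 0 ≤ A i) (j m : ℕ) :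
    discountedSum lam A j m ≤ ∑ i ∈ range m, A (j + i) := by
  induction m with
  | zero => simp
  | succ m ih =>
    rw [discountedSum_succ, sum_range_succ]
    gcongr
    exact (smul_le_of_le_one_left (discountedSum_nonneg hlam0 hA j m) hlam1).trans ih

lemma pow_smul_sum_le_discountedSum [IsOrderedRing 𝕜] (hlam0 : 0 ≤ lam) (hlam1 : lam ≤ 1)
    (hA : ∀ i, 0 ≤ A i) (j m : ℕ) :
    lam ^ m • ∑ i ∈ range (m + 1), A (j + i) ≤ discountedSum lam A j (m + 1) := by
  induction m with
  | zero => simp [discountedSum_succ]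
  | succ m ih =>
    rw [sum_range_succ, smul_add, discountedSum_succ, pow_succ', ← smul_smul]
    gcongr
    exact smul_le_of_le_one_left (hA _) (mul_le_one₀ hlam1 (pow_nonneg hlam0 m)
      (pow_le_one₀ hlam0 hlam1))

end Ordered

lemma discountedSum_le_of_window_le {𝕜 M : Type*} [Field 𝕜] [LinearOrder 𝕜]
    [IsStrictOrderedRing 𝕜] [AddCommMonoid M] [PartialOrder M] [IsOrderedAddMonoid M] [Module 𝕜 M]
    [PosSMulMono 𝕜 M] [SMulPosMono 𝕜 M] {lam : 𝕜} {A : ℕ → M} (hlam0 : 0 ≤ lam) (hlam1 : lam < 1)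
    (hA : ∀ i, 0 ≤ A i) {N : ℕ} {b : M} (hwin : ∀ j, ∑ i ∈ range (N + 1), A (j + i) ≤ b)
    (j m : ℕ) : discountedSum lam A j m ≤ (1 - lam ^ (N + 1))⁻¹ • b := by
  have hb : 0 ≤ b := (sum_nonneg fun i _ => hA (0 + i)).trans (hwin 0)
  have hpow : lam ^ (N + 1) < 1 := pow_lt_one₀ hlam0 hlam1 N.succ_ne_zero
  have hc : 1 ≤ (1 - lam ^ (N + 1))⁻¹ :=
    one_le_inv₀ (by linarith) |>.mpr (by linarith [pow_nonneg hlam0 (N + 1)])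
  have hfix : lam ^ (N + 1) * (1 - lam ^ (N + 1))⁻¹ + 1 = (1 - lam ^ (N + 1))⁻¹ := by
    field_simp
    ring
  induction m using Nat.strong_induction_on with
  | _ m ih =>
    rcases le_or_gt m (N + 1) with hm | hm
    · calc discountedSum lam A j m ≤ ∑ i ∈ range m, A (j + i) :=
            discountedSum_le_sum hlam0 hlam1.le hA j m
        _ ≤ ∑ i ∈ range (N + 1), A (j + i) :=
            sum_le_sum_of_subset_of_nonneg (range_subset_range.mpr hm) fun i _ _ => hA _
        _ ≤ b := hwin j
        _ ≤ (1 - lam ^ (N + 1))⁻¹ • b := le_smul_of_one_le_left hb hc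
    · obtain ⟨m, rfl⟩ : ∃ m', m = m' + (N + 1) := ⟨m - (N + 1), by omega⟩
      calc discountedSum lam A j (m + (N + 1))
          = lam ^ (N + 1) • discountedSum lam A j m + discountedSum lam A (j + m) (N + 1) :=
            discountedSum_add lam A j m (N + 1)
        _ ≤ lam ^ (N + 1) • (1 - lam ^ (N + 1))⁻¹ • b + b := by
            gcongr
            · exact ih m (by omega)
            · exact (discountedSum_le_sum hlam0 hlam1.le hA _ _).trans (hwin _)
        _ = (1 - lam ^ (N + 1))⁻¹ • b := by
            conv_rhs => rw [← hfix]
            rw [add_smul, one_smul, smul_smul]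

theorem stmt6_general {n p : ℕ} (N : ℕ) (α β : ℝ) (hα : 0 < α)
    (φ : ℕ → Matrix (Fin p) (Fin n) ℝ)
    (hPE : ∀ j : ℕ,
      ((∑ i ∈ Finset.Icc j (j + N), (φ i)ᵀ * φ i) -
        α • (1 : Matrix (Fin n) (Fin n) ℝ)).PosSemidef ∧
      (β • (1 : Matrix (Fin n) (Fin n) ℝ) -
        ∑ i ∈ Finset.Icc j (j + N), (φ i)ᵀ * φ i).PosSemidef)
    (lam : ℝ) (hlam : lam ∈ Set.Ioo (0 : ℝ) 1)
    (P : ℕ → Matrix (Fin n) (Fin n) ℝ) (hPk : ∀ k, (P k).PosDef)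
    (hrec : ∀ k, (P (k + 1))⁻¹ = lam • (P k)⁻¹ + (φ k)ᵀ * φ k) :
    ∀ k, N + 1 ≤ k →
      ((P k)⁻¹ -
        (lam ^ N * (1 - lam) * α / (1 - lam ^ (N + 1))) •
          (1 : Matrix (Fin n) (Fin n) ℝ)).PosSemidef ∧
      ((β / (1 - lam ^ (N + 1))) • (1 : Matrix (Fin n) (Fin n) ℝ) +
        (P N)⁻¹ - (P k)⁻¹).PosSemidef := by
  obtain ⟨hlam0, hlam1⟩ := hlam
  have hA (i : ℕ) : 0 ≤ (φ i)ᵀ * φ i := by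
    simpa [conjTranspose_eq_transpose_of_trivial] using
      (posSemidef_conjTranspose_mul_self (φ i)).nonneg
  have hQ (k : ℕ) : 0 ≤ (P k)⁻¹ := (hPk k).posSemidef.inv.nonneg
  have hunroll (j m : ℕ) : (P (j + m))⁻¹ =
      lam ^ m • (P j)⁻¹ + discountedSum lam (fun i => (φ i)ᵀ * φ i) j m :=
    eq_pow_smul_add_discountedSum lam _ (Q := fun k => (P k)⁻¹) hrec j m
  simp only [sum_Icc_add_eq_sum_range] at hPE
  intro k hk
  constructor
  · obtain ⟨j, rfl⟩ : ∃ j, k = j + (N + 1) := ⟨k - (N + 1), by omega⟩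
    have hconst : lam ^ N * (1 - lam) * α / (1 - lam ^ (N + 1)) ≤ lam ^ N * α := by
      have hpow : lam ^ (N + 1) ≤ lam := pow_le_of_le_one hlam0.le hlam1.le N.succ_ne_zero
      rw [div_le_iff₀ (by linarith)]
      nlinarith [mul_pos (pow_pos hlam0 N) hα]
    refine le_iff.mp ?_
    calc (lam ^ N * (1 - lam) * α / (1 - lam ^ (N + 1))) • (1 : Matrix (Fin n) (Fin n) ℝ)
        ≤ lam ^ N • α • 1 := by
          rw [smul_smul]; exact smul_le_smul_of_nonneg_right hconst zero_le_one
      _ ≤ lam ^ N • ∑ i ∈ range (N + 1), (φ (j + i))ᵀ * φ (j + i) := by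
          gcongr; exact (hPE j).1
      _ ≤ discountedSum lam (fun i => (φ i)ᵀ * φ i) j (N + 1) :=
          pow_smul_sum_le_discountedSum hlam0.le hlam1.le hA j N
      _ ≤ (P (j + (N + 1)))⁻¹ := by
          rw [hunroll]; exact le_add_of_nonneg_left (smul_nonneg (by positivity) (hQ j))
  · obtain ⟨m, rfl⟩ : ∃ m, k = N + m := ⟨k - N, by omega⟩
    refine le_iff.mp ?_
    rw [hunroll, add_comm (lam ^ m • _), div_eq_inv_mul, ← smul_smul]
    gcongr
    · exact discountedSum_le_of_window_le hlam0.le hlam1 hA (fun j => (hPE j).2) N m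
    · exact smul_le_of_le_one_left (hQ N) (pow_le_one₀ hlam0.le hlam1.le)

theorem stmt6 {n p : ℕ} (N : ℕ) (α β : ℝ) (hα : 0 < α) (hβ : 0 < β)
    (hN : (n : ℝ) ≤ (N : ℝ) * (p : ℝ))
    (φ : ℕ → Matrix (Fin p) (Fin n) ℝ)
    (hPE : ∀ j : ℕ,
      ((∑ i ∈ Finset.Icc j (j + N), (φ i)ᵀ * φ i) -
        α • (1 : Matrix (Fin n) (Fin n) ℝ)).PosSemidef ∧
      (β • (1 : Matrix (Fin n) (Fin n) ℝ) -
        ∑ i ∈ Finset.Icc j (j + N), (φ i)ᵀ * φ i).PosSemidef)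
    (R : Matrix (Fin n) (Fin n) ℝ) (hR : R.PosDef)
    (lam : ℝ) (hlam : lam ∈ Set.Ioo (0 : ℝ) 1)
    (P : ℕ → Matrix (Fin n) (Fin n) ℝ) (hP0 : P 0 = R⁻¹) (hPk : ∀ k, (P k).PosDef)
    (hrec : ∀ k, (P (k + 1))⁻¹ = lam • (P k)⁻¹ + (φ k)ᵀ * φ k) :
    ∀ k, N + 1 ≤ k →
      ((P k)⁻¹ -
        (lam ^ N * (1 - lam) * α / (1 - lam ^ (N + 1))) •
          (1 : Matrix (Fin n) (Fin n) ℝ)).PosSemidef ∧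
      ((β / (1 - lam ^ (N + 1))) • (1 : Matrix (Fin n) (Fin n) ℝ) +
        (P N)⁻¹ - (P k)⁻¹).PosSemidef :=
  stmt6_general N α β hα φ hPE lam hlam P hPk hrec
end

section
/- Let (φ_k)_{k=0}^∞ ⊂ ℝ^{p×n}, let R ∈ ℝ^{n×n} be positive definite, set P_0 := R^{-1}, let λ ∈ (0,1), and let (P_k)_{k=0}^∞ satisfy the RLS covariance recursion P_{k+1}^{-1} = λ P_k^{-1} + φ_k^T φ_k. Suppose there exist ᾱ, β̄ ∈ (0,∞) such that for all k ≥ 0, ᾱ·I_n ≤ P_k^{-1} ≤ β̄·I_n. Let N be an integer with N ≥ (λβ̄ − ᾱ)/((1−λ)ᾱ). Then for all j ≥ 0, ((1 + (1−λ)N)ᾱ − λβ̄)·I_n ≤ Σ_{i=j}^{j+N} φ_i^T φ_i ≤ ((1 − λ^{N+1})/(λ^N(1−λ))) β̄ · I_n in the Loewner order; consequently, (φ_k)_{k=0}^∞ is persistently exciting. -/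
/-!
Write `Q k = (P k)⁻¹`. The recursion telescopes over a window:
`∑_{i=j}^{j+m} φᵢᵀφᵢ = Q (j+m+1) - λ Q j + (1 - λ) ∑_{i=j+1}^{j+m} Q i`,
and `ᾱ ≤ Q i ≤ β̄` turns this into the lower bound. Each term `φₖᵀφₖ = Q (k+1) - λ Q k` is at
most `β̄`, so a window of length `m + 1` sums to at most `(m + 1) β̄ ≤ β̄ ∑_{k ≤ m} λ^(k-m)`.
For persistent excitation take `N' ≥ n` large enough for the lower constant to be positive;
when `p = 0` every `φᵢᵀφᵢ` vanishes, so this positive lower bound forces `n = 0`.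
-/

open scoped MatrixOrder
open Matrix Finset

section Telescoping

variable {R M : Type*} [CommRing R] [AddCommGroup M] [Module R M] {c : R} {Q A : ℕ → M}

theorem sum_Icc_eq_of_forall_succ_eq_smul_add (hQ : ∀ k, Q (k + 1) = c • Q k + A k)
    (j m : ℕ) :
    ∑ i ∈ Icc j (j + m), A i =
      Q (j + m + 1) - c • Q j + (1 - c) • ∑ i ∈ Icc (j + 1) (j + m), Q i := by
  induction m with
  | zero => simp [hQ]
  | succ m ih =>
    rw [← add_assoc, sum_Icc_succ_top (by omega), sum_Icc_succ_top (by omega), ih, hQ (j + m + 1)]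
    module

end Telescoping

section OrderedModule

variable {M : Type*} [AddCommGroup M] [PartialOrder M] [IsOrderedAddMonoid M] [Module ℝ M]
  [PosSMulMono ℝ M] {c : ℝ} {Q A : ℕ → M} {a b : M}

theorem smul_sub_smul_le_sum_Icc_of_forall_succ_eq_smul_add
    (hQ : ∀ k, Q (k + 1) = c • Q k + A k) (hc₀ : 0 ≤ c) (hc₁ : c ≤ 1) (ha : ∀ k, a ≤ Q k)
    (hb : ∀ k, Q k ≤ b) (j m : ℕ) :
    (1 + (1 - c) * m) • a - c • b ≤ ∑ i ∈ Icc j (j + m), A i := by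
  have hconst : (1 + (1 - c) * m) • a - c • b =
      a - c • b + (1 - c) • ∑ _i ∈ Icc (j + 1) (j + m), a := by
    rw [sum_const, Nat.card_Icc, show j + m + 1 - (j + 1) = m by omega,
      ← Nat.cast_smul_eq_nsmul ℝ]
    module
  rw [hconst, sum_Icc_eq_of_forall_succ_eq_smul_add hQ]
  gcongr
  · exact ha _
  · exact hb _
  · exact ha _

theorem sum_Icc_le_of_forall_succ_eq_smul_add (hQ : ∀ k, Q (k + 1) = c • Q k + A k)
    (hc₀ : 0 ≤ c) (hQ₀ : ∀ k, 0 ≤ Q k) (hb : ∀ k, Q k ≤ b) (j m : ℕ) :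
    ∑ i ∈ Icc j (j + m), A i ≤ ((m : ℝ) + 1) • b := by
  have hA : ∀ k, A k ≤ b := fun k => calc
    A k = Q (k + 1) - c • Q k := by rw [hQ, add_sub_cancel_left]
    _ ≤ Q (k + 1) := sub_le_self _ (smul_nonneg hc₀ (hQ₀ k))
    _ ≤ b := hb _
  calc ∑ i ∈ Icc j (j + m), A i ≤ ∑ _i ∈ Icc j (j + m), b := sum_le_sum fun i _ => hA i
    _ = ((m : ℝ) + 1) • b := by
      rw [sum_const, Nat.card_Icc, show j + m + 1 - j = m + 1 by omega,
        ← Nat.cast_smul_eq_nsmul ℝ]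
      push_cast; rfl

end OrderedModule

theorem add_one_le_one_sub_pow_succ_div {c : ℝ} (hc₀ : 0 < c) (hc₁ : c < 1) (m : ℕ) :
    (m + 1 : ℝ) ≤ (1 - c ^ (m + 1)) / (c ^ m * (1 - c)) := by
  have hgeom : 1 - c ^ (m + 1) = (∑ k ∈ range (m + 1), c ^ k) * (1 - c) := by
    linear_combination geom_sum_mul c (m + 1)
  have hsum : (m + 1 : ℝ) * c ^ m ≤ ∑ k ∈ range (m + 1), c ^ k := calc
    (m + 1 : ℝ) * c ^ m = ∑ _k ∈ range (m + 1), c ^ m := by simp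
    _ ≤ ∑ k ∈ range (m + 1), c ^ k := sum_le_sum fun k hk =>
      pow_le_pow_of_le_one hc₀.le hc₁.le (Nat.lt_succ_iff.mp (mem_range.mp hk))
  rw [hgeom, le_div_iff₀ (by have := pow_pos hc₀ m; nlinarith)]
  nlinarith [pow_pos hc₀ m]

theorem Matrix.isEmpty_of_smul_one_nonpos {ι : Type*} [Fintype ι] [DecidableEq ι] {t : ℝ}
    (ht : 0 < t) (h : t • (1 : Matrix ι ι ℝ) ≤ 0) : IsEmpty ι := by
  refine ⟨fun i => ?_⟩
  have := (le_iff.mp h).diag_nonneg (i := i)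
  simp only [sub_apply, zero_apply, smul_apply, one_apply_eq, smul_eq_mul, mul_one, zero_sub,
    Left.nonneg_neg_iff] at this
  linarith

theorem sum_Icc_transpose_mul_self_mem_Icc {n p : ℕ} {lam α β : ℝ}
    {φ : ℕ → Matrix (Fin p) (Fin n) ℝ} {Q : ℕ → Matrix (Fin n) (Fin n) ℝ}
    (hlam₀ : 0 < lam) (hlam₁ : lam < 1) (hα : 0 < α) (hβ : 0 ≤ β)
    (hrec : ∀ k, Q (k + 1) = lam • Q k + (φ k)ᵀ * φ k)
    (ha : ∀ k, α • 1 ≤ Q k) (hb : ∀ k, Q k ≤ β • 1) (m j : ℕ) :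
    ∑ i ∈ Icc j (j + m), (φ i)ᵀ * φ i ∈ Set.Icc
      (((1 + (1 - lam) * m) * α - lam * β) • 1)
      (((1 - lam ^ (m + 1)) / (lam ^ m * (1 - lam)) * β) • 1) := by
  constructor
  · rw [sub_smul, mul_smul, mul_smul]
    exact smul_sub_smul_le_sum_Icc_of_forall_succ_eq_smul_add hrec hlam₀.le hlam₁.le ha hb j m
  · refine (sum_Icc_le_of_forall_succ_eq_smul_add hrec hlam₀.le
      (fun k => (smul_nonneg hα.le (zero_le_one' _)).trans (ha k)) hb j m).trans ?_
    rw [← mul_smul]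
    gcongr
    exact add_one_le_one_sub_pow_succ_div hlam₀ hlam₁ m

theorem stmt7_general {n p : ℕ} (lam : ℝ) (hlam : lam ∈ Set.Ioo (0 : ℝ) 1)
    (φ : ℕ → Matrix (Fin p) (Fin n) ℝ)
    (P : ℕ → Matrix (Fin n) (Fin n) ℝ)
    (hrec : ∀ k, (P (k + 1))⁻¹ = lam • (P k)⁻¹ + (φ k)ᵀ * φ k)
    (α' β' : ℝ) (hα' : 0 < α') (hβ' : 0 < β')
    (hbound : ∀ k,
      ((P k)⁻¹ - α' • (1 : Matrix (Fin n) (Fin n) ℝ)).PosSemidef ∧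
      (β' • (1 : Matrix (Fin n) (Fin n) ℝ) - (P k)⁻¹).PosSemidef)
    (N : ℕ) :
    (∀ j : ℕ,
      ((∑ i ∈ Finset.Icc j (j + N), (φ i)ᵀ * φ i) -
        ((1 + (1 - lam) * (N : ℝ)) * α' - lam * β') •
          (1 : Matrix (Fin n) (Fin n) ℝ)).PosSemidef ∧
      ((((1 - lam ^ (N + 1)) / (lam ^ N * (1 - lam))) * β') •
          (1 : Matrix (Fin n) (Fin n) ℝ) -
        ∑ i ∈ Finset.Icc j (j + N), (φ i)ᵀ * φ i).PosSemidef) ∧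
    (∃ N' : ℕ, (n : ℝ) ≤ (N' : ℝ) * (p : ℝ) ∧
      ∃ α β : ℝ, 0 < α ∧ 0 < β ∧ ∀ j : ℕ,
        ((∑ i ∈ Finset.Icc j (j + N'), (φ i)ᵀ * φ i) -
          α • (1 : Matrix (Fin n) (Fin n) ℝ)).PosSemidef ∧
        (β • (1 : Matrix (Fin n) (Fin n) ℝ) -
          ∑ i ∈ Finset.Icc j (j + N'), (φ i)ᵀ * φ i).PosSemidef) := by
  obtain ⟨hlam₀, hlam₁⟩ := hlam
  have window := sum_Icc_transpose_mul_self_mem_Icc hlam₀ hlam₁ hα' hβ'.le hrec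
    (fun k => (hbound k).1) (fun k => (hbound k).2)
  refine ⟨window N, ?_⟩
  obtain ⟨N₀, hN₀⟩ := exists_nat_gt ((lam * β' - α') / ((1 - lam) * α'))
  set N' := max n N₀
  have hα : 0 < (1 + (1 - lam) * (N' : ℝ)) * α' - lam * β' := by
    have hgap : 0 < (1 - lam) * α' := mul_pos (sub_pos.mpr hlam₁) hα'
    have hN₀N' : (N₀ : ℝ) ≤ N' := by exact_mod_cast le_max_right n N₀
    rw [div_lt_iff₀ hgap] at hN₀
    nlinarith [mul_le_mul_of_nonneg_right hN₀N' hgap.le]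
  have hβ : 0 < (1 - lam ^ (N' + 1)) / (lam ^ N' * (1 - lam)) * β' :=
    mul_pos ((Nat.cast_add_one_pos N').trans_le
      (add_one_le_one_sub_pow_succ_div hlam₀ hlam₁ N')) hβ'
  refine ⟨N', ?_, _, _, hα, hβ, window N'⟩
  rcases Nat.eq_zero_or_pos p with rfl | hp
  · have hφ : ∀ i, (φ i)ᵀ * φ i = 0 := fun i => by
      rw [Subsingleton.elim (φ i) 0, Matrix.mul_zero]
    have hle := (window N' 0).1
    simp only [hφ, sum_const_zero] at hle
    have hn : n = 0 := by
      simpa using Fintype.card_eq_zero_iff.mpr (Matrix.isEmpty_of_smul_one_nonpos hα hle)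
    simp [hn]
  · exact_mod_cast (le_max_left n N₀).trans (Nat.le_mul_of_pos_right N' hp)

theorem stmt7 {n p : ℕ} (lam : ℝ) (hlam : lam ∈ Set.Ioo (0 : ℝ) 1)
    (φ : ℕ → Matrix (Fin p) (Fin n) ℝ)
    (R : Matrix (Fin n) (Fin n) ℝ) (hR : R.PosDef)
    (P : ℕ → Matrix (Fin n) (Fin n) ℝ) (hP0 : P 0 = R⁻¹) (hPk : ∀ k, (P k).PosDef)
    (hrec : ∀ k, (P (k + 1))⁻¹ = lam • (P k)⁻¹ + (φ k)ᵀ * φ k)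
    (α' β' : ℝ) (hα' : 0 < α') (hβ' : 0 < β')
    (hbound : ∀ k,
      ((P k)⁻¹ - α' • (1 : Matrix (Fin n) (Fin n) ℝ)).PosSemidef ∧
      (β' • (1 : Matrix (Fin n) (Fin n) ℝ) - (P k)⁻¹).PosSemidef)
    (N : ℕ) (hN : (lam * β' - α') / ((1 - lam) * α') ≤ (N : ℝ)) :
    (∀ j : ℕ,
      ((∑ i ∈ Finset.Icc j (j + N), (φ i)ᵀ * φ i) -
        ((1 + (1 - lam) * (N : ℝ)) * α' - lam * β') •
          (1 : Matrix (Fin n) (Fin n) ℝ)).PosSemidef ∧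
      ((((1 - lam ^ (N + 1)) / (lam ^ N * (1 - lam))) * β') •
          (1 : Matrix (Fin n) (Fin n) ℝ) -
        ∑ i ∈ Finset.Icc j (j + N), (φ i)ᵀ * φ i).PosSemidef) ∧
    (∃ N' : ℕ, (n : ℝ) ≤ (N' : ℝ) * (p : ℝ) ∧
      ∃ α β : ℝ, 0 < α ∧ 0 < β ∧ ∀ j : ℕ,
        ((∑ i ∈ Finset.Icc j (j + N'), (φ i)ᵀ * φ i) -
          α • (1 : Matrix (Fin n) (Fin n) ℝ)).PosSemidef ∧
        (β • (1 : Matrix (Fin n) (Fin n) ℝ) -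
          ∑ i ∈ Finset.Icc j (j + N'), (φ i)ᵀ * φ i).PosSemidef) :=
  stmt7_general lam hlam φ P hrec α' β' hα' hβ' hbound N
end

section
/- Let (φ_k)_{k=0}^∞ ⊂ ℝ^{p×n} be persistently exciting with constants N, α, β as in the definition, let R ∈ ℝ^{n×n} be positive definite, set P_0 := R^{-1}, let λ ∈ (0,1), and let (P_k)_{k=0}^∞ satisfy the RLS covariance recursion P_{k+1}^{-1} = λ P_k^{-1} + φ_k^T φ_k. Consider the parameter-error dynamics θ̃_{k+1} = (I_n − P_{k+1} φ_k^T φ_k) θ̃_k. Then the zero solution is uniformly globally geometrically stable: there exists c > 0 such that for every k₀ ≥ N+1, every θ̃_{k₀} ∈ ℝ^n, and every k ≥ k₀, the solution satisfies ‖θ̃_k‖ ≤ c λ^{k−k₀} ‖θ̃_{k₀}‖. -/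
/-!
Write `Q k = (P k)⁻¹` for the information matrix, so `Q (k+1) = λ Q k + φ kᵀ φ k`. The error
dynamics become `Q (k+1) θ̃ (k+1) = λ Q k θ̃ k`, hence `Q k θ̃ k = λ^(k-k₀) Q k₀ θ̃ k₀`.
Unrolling the recursion over one excitation window gives `λ^N α ≤ Q k` for `k ≥ N + 1`, while
`‖φ kᵀ φ k‖ ≤ β` and the contraction by `λ` give `‖Q k‖ ≤ ‖Q 0‖ + β / (1 - λ)` in operator norm.
Therefore
`λ^N α ‖θ̃ k‖ ≤ ‖Q k θ̃ k‖ = λ^(k-k₀) ‖Q k₀ θ̃ k₀‖ ≤ λ^(k-k₀) (‖Q 0‖ + β / (1 - λ)) ‖θ̃ k₀‖`.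
-/

open Matrix

open scoped Matrix.Norms.L2Operator

lemma pow_mul_sum_Icc_le_of_mul_add_le {lam : ℝ} (hlam0 : 0 ≤ lam) (hlam1 : lam ≤ 1)
    {q f : ℕ → ℝ} (hf : ∀ k, 0 ≤ f k) (hrec : ∀ k, lam * q k + f k ≤ q (k + 1))
    (j : ℕ) (hq : 0 ≤ q j) (l : ℕ) :
    lam ^ l * ∑ i ∈ Finset.Icc j (j + l), f i ≤ q (j + l + 1) := by
  induction l with
  | zero => simpa using (le_add_of_nonneg_left (mul_nonneg hlam0 hq)).trans (hrec j)
  | succ l ih =>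
    rw [← add_assoc, Finset.sum_Icc_succ_top (by omega)]
    calc lam ^ (l + 1) * (∑ i ∈ Finset.Icc j (j + l), f i + f (j + l + 1))
        = lam * (lam ^ l * ∑ i ∈ Finset.Icc j (j + l), f i) + lam ^ (l + 1) * f (j + l + 1) := by
          ring
      _ ≤ lam * q (j + l + 1) + f (j + l + 1) := by
          gcongr
          exact mul_le_of_le_one_left (hf _) (pow_le_one₀ hlam0 hlam1)
      _ ≤ q (j + l + 1 + 1) := hrec _

lemma le_add_div_one_sub_of_le_mul_add {lam b : ℝ} (hlam0 : 0 ≤ lam) (hlam1 : lam < 1)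
    (hb : 0 ≤ b) {a : ℕ → ℝ} (ha : 0 ≤ a 0) (hrec : ∀ k, a (k + 1) ≤ lam * a k + b) (k : ℕ) :
    a k ≤ a 0 + b / (1 - lam) := by
  have hpos : 0 < 1 - lam := sub_pos.mpr hlam1
  induction k with
  | zero => simpa using div_nonneg hb hpos.le
  | succ k ih =>
    calc a (k + 1) ≤ lam * (a 0 + b / (1 - lam)) + b :=
          (hrec k).trans (by gcongr)
      _ = a 0 + b / (1 - lam) - (1 - lam) * a 0 := by field_simp; ring
      _ ≤ a 0 + b / (1 - lam) := sub_le_self _ (mul_nonneg hpos.le ha)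

section

variable {ι κ : Type*} [Fintype ι] [Fintype κ]

lemma norm_toLp_sq (x : ι → ℝ) : ‖WithLp.toLp 2 x‖ ^ 2 = x ⬝ᵥ x := by
  rw [EuclideanSpace.real_norm_sq_eq]
  simp [dotProduct, sq]

lemma sqrt_dotProduct_self_eq_norm (x : ι → ℝ) : √(x ⬝ᵥ x) = ‖WithLp.toLp 2 x‖ := by
  rw [← norm_toLp_sq, Real.sqrt_sq (norm_nonneg _)]

lemma dotProduct_mulVec_le_of_posSemidef_sub {A B : Matrix ι ι ℝ} (h : (B - A).PosSemidef)
    (x : ι → ℝ) : x ⬝ᵥ (A *ᵥ x) ≤ x ⬝ᵥ (B *ᵥ x) := by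
  simpa [sub_mulVec] using h.dotProduct_mulVec_nonneg x

lemma dotProduct_transpose_mul_self_mulVec (A : Matrix κ ι ℝ) (x : ι → ℝ) :
    x ⬝ᵥ ((Aᵀ * A) *ᵥ x) = (A *ᵥ x) ⬝ᵥ (A *ᵥ x) := by
  rw [← mulVec_mulVec, dotProduct_mulVec, vecMul_transpose]

lemma dotProduct_transpose_mul_self_mulVec_nonneg (A : Matrix κ ι ℝ) (x : ι → ℝ) :
    0 ≤ x ⬝ᵥ ((Aᵀ * A) *ᵥ x) := by
  rw [dotProduct_transpose_mul_self_mulVec]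
  exact dotProduct_self_star_nonneg _

lemma mul_norm_le_norm_mulVec {Q : Matrix ι ι ℝ} {m : ℝ} {x : ι → ℝ}
    (h : m * (x ⬝ᵥ x) ≤ x ⬝ᵥ (Q *ᵥ x)) :
    m * ‖WithLp.toLp 2 x‖ ≤ ‖WithLp.toLp 2 (Q *ᵥ x)‖ := by
  have hx := norm_nonneg (WithLp.toLp 2 x)
  have hCS : m * ‖WithLp.toLp 2 x‖ * ‖WithLp.toLp 2 x‖ ≤
      ‖WithLp.toLp 2 (Q *ᵥ x)‖ * ‖WithLp.toLp 2 x‖ := by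
    calc m * ‖WithLp.toLp 2 x‖ * ‖WithLp.toLp 2 x‖ = m * (x ⬝ᵥ x) := by
          rw [mul_assoc, ← real_inner_self_eq_norm_mul_norm, EuclideanSpace.inner_toLp_toLp,
            star_trivial]
      _ ≤ inner ℝ (WithLp.toLp 2 x) (WithLp.toLp 2 (Q *ᵥ x)) := by
          rwa [EuclideanSpace.inner_toLp_toLp, star_trivial, dotProduct_comm (Q *ᵥ x)]
      _ ≤ _ := (real_inner_le_norm _ _).trans_eq (mul_comm _ _)
  rcases hx.eq_or_lt with h0 | h0
  · rw [← h0, mul_zero]; exact norm_nonneg _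
  · exact le_of_mul_le_mul_right hCS h0

variable [DecidableEq ι]

lemma l2_opNorm_transpose_mul_self_le {A : Matrix κ ι ℝ} {β : ℝ} (hβ : 0 ≤ β)
    (h : ∀ x, x ⬝ᵥ ((Aᵀ * A) *ᵥ x) ≤ β * (x ⬝ᵥ x)) : ‖Aᵀ * A‖ ≤ β := by
  have hA : ‖A‖ ≤ √β := by
    refine ContinuousLinearMap.opNorm_le_bound _ (Real.sqrt_nonneg β) fun x => ?_
    rw [← Real.sqrt_sq (norm_nonneg _), ← Real.sqrt_sq (norm_nonneg x), ← Real.sqrt_mul hβ]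
    refine Real.sqrt_le_sqrt ?_
    change ‖WithLp.toLp 2 (A *ᵥ x.ofLp)‖ ^ 2 ≤ β * ‖WithLp.toLp 2 x.ofLp‖ ^ 2
    rw [norm_toLp_sq, norm_toLp_sq, ← dotProduct_transpose_mul_self_mulVec]
    exact h _
  rw [← conjTranspose_eq_transpose_of_trivial, l2_opNorm_conjTranspose_mul_self]
  calc ‖A‖ * ‖A‖ ≤ √β * √β := mul_self_le_mul_self (norm_nonneg A) hA
    _ = β := Real.mul_self_sqrt hβ

variable {lam : ℝ} {Q : ℕ → Matrix ι ι ℝ} {φ : ℕ → Matrix κ ι ℝ}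

lemma pow_mul_dotProduct_self_le_dotProduct_mulVec (hlam0 : 0 ≤ lam) (hlam1 : lam ≤ 1)
    (hQ : ∀ k, (Q k).PosSemidef) (hrec : ∀ k, Q (k + 1) = lam • Q k + (φ k)ᵀ * φ k)
    {N : ℕ} {α : ℝ} (hPE : ∀ j, (∑ i ∈ Finset.Icc j (j + N), (φ i)ᵀ * φ i - α • 1).PosSemidef)
    (k : ℕ) (hk : N + 1 ≤ k) (x : ι → ℝ) :
    lam ^ N * α * (x ⬝ᵥ x) ≤ x ⬝ᵥ (Q k *ᵥ x) := by
  obtain ⟨j, rfl⟩ : ∃ j, k = j + N + 1 := ⟨k - (N + 1), by omega⟩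
  have hwindow : α * (x ⬝ᵥ x) ≤ ∑ i ∈ Finset.Icc j (j + N), x ⬝ᵥ (((φ i)ᵀ * φ i) *ᵥ x) := by
    simpa [sum_mulVec, dotProduct_sum, smul_mulVec, dotProduct_smul] using
      dotProduct_mulVec_le_of_posSemidef_sub (hPE j) x
  have hstep : ∀ k, lam * (x ⬝ᵥ (Q k *ᵥ x)) + x ⬝ᵥ (((φ k)ᵀ * φ k) *ᵥ x) ≤
      x ⬝ᵥ (Q (k + 1) *ᵥ x) := fun k => by
    rw [hrec, add_mulVec, smul_mulVec, dotProduct_add, dotProduct_smul, smul_eq_mul]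
  calc lam ^ N * α * (x ⬝ᵥ x)
      ≤ lam ^ N * ∑ i ∈ Finset.Icc j (j + N), x ⬝ᵥ (((φ i)ᵀ * φ i) *ᵥ x) := by
        rw [mul_assoc]; gcongr
    _ ≤ x ⬝ᵥ (Q (j + N + 1) *ᵥ x) :=
        pow_mul_sum_Icc_le_of_mul_add_le hlam0 hlam1
          (fun i => dotProduct_transpose_mul_self_mulVec_nonneg (φ i) x)
          hstep j (by simpa using (hQ j).dotProduct_mulVec_nonneg x) N

lemma dotProduct_transpose_mul_self_mulVec_le {N : ℕ} {β : ℝ}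
    (hPE : ∀ j, (β • 1 - ∑ i ∈ Finset.Icc j (j + N), (φ i)ᵀ * φ i).PosSemidef) (k : ℕ)
    (x : ι → ℝ) : x ⬝ᵥ (((φ k)ᵀ * φ k) *ᵥ x) ≤ β * (x ⬝ᵥ x) := by
  have hwindow := dotProduct_mulVec_le_of_posSemidef_sub (hPE k) x
  simp only [sum_mulVec, dotProduct_sum, smul_mulVec, one_mulVec, dotProduct_smul,
    smul_eq_mul] at hwindow
  refine le_trans ?_ hwindow
  exact Finset.single_le_sum (fun i _ => dotProduct_transpose_mul_self_mulVec_nonneg (φ i) x)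
    (Finset.left_mem_Icc.mpr (Nat.le_add_right k N))

lemma l2_opNorm_le_of_rec (hlam0 : 0 ≤ lam) (hlam1 : lam < 1)
    (hrec : ∀ k, Q (k + 1) = lam • Q k + (φ k)ᵀ * φ k) {β : ℝ} (hβ : 0 ≤ β)
    (hφ : ∀ k, ‖(φ k)ᵀ * φ k‖ ≤ β) (k : ℕ) : ‖Q k‖ ≤ ‖Q 0‖ + β / (1 - lam) := by
  refine le_add_div_one_sub_of_le_mul_add (a := fun k => ‖Q k‖) hlam0 hlam1 hβ (norm_nonneg _)
    (fun k => ?_) k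
  rw [hrec]
  calc ‖lam • Q k + (φ k)ᵀ * φ k‖ ≤ ‖lam • Q k‖ + ‖(φ k)ᵀ * φ k‖ := norm_add_le _ _
    _ ≤ lam * ‖Q k‖ + β := by
        rw [norm_smul, Real.norm_of_nonneg hlam0]
        gcongr
        exact hφ k

lemma mulVec_error_eq_pow_smul {P : ℕ → Matrix ι ι ℝ} (hinv : ∀ k, Q k * P k = 1)
    (hrec : ∀ k, Q (k + 1) = lam • Q k + (φ k)ᵀ * φ k) {θ : ℕ → ι → ℝ}
    (hθ : ∀ k, θ (k + 1) = (1 - P (k + 1) * (φ k)ᵀ * φ k) *ᵥ θ k) (k₀ d : ℕ) :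
    Q (k₀ + d) *ᵥ θ (k₀ + d) = lam ^ d • (Q k₀ *ᵥ θ k₀) := by
  induction d with
  | zero => simp
  | succ d ih =>
    have hstep : Q (k₀ + d + 1) * (1 - P (k₀ + d + 1) * (φ (k₀ + d))ᵀ * φ (k₀ + d)) =
        lam • Q (k₀ + d) := by
      rw [mul_sub, mul_one, ← Matrix.mul_assoc, ← Matrix.mul_assoc, hinv, Matrix.one_mul, hrec,
        add_sub_cancel_right]
    rw [← add_assoc, hθ, mulVec_mulVec, hstep, smul_mulVec, ih, smul_smul, pow_succ']

end

theorem stmt10_general {n p : ℕ} (N : ℕ) (α β : ℝ) (hα : 0 < α) (hβ : 0 < β)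
    (φ : ℕ → Matrix (Fin p) (Fin n) ℝ)
    (hPE : ∀ j : ℕ,
      ((∑ i ∈ Finset.Icc j (j + N), (φ i)ᵀ * φ i) -
        α • (1 : Matrix (Fin n) (Fin n) ℝ)).PosSemidef ∧
      (β • (1 : Matrix (Fin n) (Fin n) ℝ) -
        ∑ i ∈ Finset.Icc j (j + N), (φ i)ᵀ * φ i).PosSemidef)
    (lam : ℝ) (hlam : lam ∈ Set.Ioo (0 : ℝ) 1)
    (P : ℕ → Matrix (Fin n) (Fin n) ℝ) (hPk : ∀ k, (P k).PosDef)
    (hrec : ∀ k, (P (k + 1))⁻¹ = lam • (P k)⁻¹ + (φ k)ᵀ * φ k) :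
    ∃ c > (0 : ℝ), ∀ k₀, N + 1 ≤ k₀ →
      ∀ θt : ℕ → (Fin n → ℝ),
        (∀ k, θt (k + 1) =
          ((1 : Matrix (Fin n) (Fin n) ℝ) - P (k + 1) * (φ k)ᵀ * φ k) *ᵥ θt k) →
        ∀ k, k₀ ≤ k →
          Real.sqrt (θt k ⬝ᵥ θt k) ≤
            c * lam ^ (k - k₀) * Real.sqrt (θt k₀ ⬝ᵥ θt k₀) := by
  obtain ⟨hlam0, hlam1⟩ := hlam
  set M := ‖(P 0)⁻¹‖ + β / (1 - lam)
  have hm : 0 < lam ^ N * α := by positivity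
  have hupper : ∀ k, ‖(P k)⁻¹‖ ≤ M :=
    l2_opNorm_le_of_rec hlam0.le hlam1 hrec hβ.le fun k => l2_opNorm_transpose_mul_self_le hβ.le
      (dotProduct_transpose_mul_self_mulVec_le (fun j => (hPE j).2) k)
  have hlower := pow_mul_dotProduct_self_le_dotProduct_mulVec hlam0.le hlam1.le
    (fun k => (hPk k).inv.posSemidef) hrec (fun j => (hPE j).1)
  have hinv : ∀ k, (P k)⁻¹ * P k = 1 := fun k =>
    nonsing_inv_mul _ ((isUnit_iff_isUnit_det _).mp (hPk k).isUnit)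
  refine ⟨M / (lam ^ N * α), by positivity, fun k₀ hk₀ θ hθ k hk => ?_⟩
  obtain ⟨d, rfl⟩ := Nat.exists_eq_add_of_le hk
  rw [Nat.add_sub_cancel_left, sqrt_dotProduct_self_eq_norm, sqrt_dotProduct_self_eq_norm,
    div_mul_eq_mul_div, div_mul_eq_mul_div, le_div_iff₀ hm]
  calc ‖WithLp.toLp 2 (θ (k₀ + d))‖ * (lam ^ N * α)
      ≤ ‖WithLp.toLp 2 ((P (k₀ + d))⁻¹ *ᵥ θ (k₀ + d))‖ := by
        rw [mul_comm]; exact mul_norm_le_norm_mulVec (hlower _ (by omega) _)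
    _ = lam ^ d * ‖WithLp.toLp 2 ((P k₀)⁻¹ *ᵥ θ k₀)‖ := by
        rw [mulVec_error_eq_pow_smul hinv hrec hθ, WithLp.toLp_smul, norm_smul,
          Real.norm_of_nonneg (by positivity)]
    _ ≤ lam ^ d * (M * ‖WithLp.toLp 2 (θ k₀)‖) := by
        gcongr
        exact ((P k₀)⁻¹.l2_opNorm_mulVec _).trans (by gcongr; exact hupper k₀)
    _ = M * lam ^ d * ‖WithLp.toLp 2 (θ k₀)‖ := by ring

theorem stmt10 {n p : ℕ} (N : ℕ) (α β : ℝ) (hα : 0 < α) (hβ : 0 < β)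
    (hN : (n : ℝ) ≤ (N : ℝ) * (p : ℝ))
    (φ : ℕ → Matrix (Fin p) (Fin n) ℝ)
    (hPE : ∀ j : ℕ,
      ((∑ i ∈ Finset.Icc j (j + N), (φ i)ᵀ * φ i) -
        α • (1 : Matrix (Fin n) (Fin n) ℝ)).PosSemidef ∧
      (β • (1 : Matrix (Fin n) (Fin n) ℝ) -
        ∑ i ∈ Finset.Icc j (j + N), (φ i)ᵀ * φ i).PosSemidef)
    (R : Matrix (Fin n) (Fin n) ℝ) (hR : R.PosDef)
    (lam : ℝ) (hlam : lam ∈ Set.Ioo (0 : ℝ) 1)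
    (P : ℕ → Matrix (Fin n) (Fin n) ℝ) (hP0 : P 0 = R⁻¹) (hPk : ∀ k, (P k).PosDef)
    (hrec : ∀ k, (P (k + 1))⁻¹ = lam • (P k)⁻¹ + (φ k)ᵀ * φ k) :
    ∃ c > (0 : ℝ), ∀ k₀, N + 1 ≤ k₀ →
      ∀ θt : ℕ → (Fin n → ℝ),
        (∀ k, θt (k + 1) =
          ((1 : Matrix (Fin n) (Fin n) ℝ) - P (k + 1) * (φ k)ᵀ * φ k) *ᵥ θt k) →
        ∀ k, k₀ ≤ k →
          Real.sqrt (θt k ⬝ᵥ θt k) ≤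
            c * lam ^ (k - k₀) * Real.sqrt (θt k₀ ⬝ᵥ θt k₀) :=
  stmt10_general N α β hα hβ φ hPE lam hlam P hPk hrec
end

section
/- Let (φ_k)_{k=0}^∞ ⊂ ℝ^{p×n} be persistently exciting, let R ∈ ℝ^{n×n} be positive definite, set P_0 := R^{-1}, let λ = 1, and let (P_k)_{k=0}^∞ satisfy the RLS covariance recursion P_{k+1}^{-1} = P_k^{-1} + φ_k^T φ_k. Consider the parameter-error dynamics θ̃_{k+1} = (I_n − P_{k+1} φ_k^T φ_k) θ̃_k. Then: (i) for every initial condition θ̃_0 ∈ ℝ^n, θ̃_k → 0 as k → ∞; and (ii) for every k₀ ≥ 0, every θ̃_{k₀} ∈ ℝ^n, and every k ≥ k₀, ‖θ̃_k‖ ≤ ‖P_0‖·‖P_{k₀}^{-1}‖·‖θ̃_{k₀}‖, where ‖·‖ on matrices is the spectral (operator) norm. In particular, the zero solution is globally asymptotically stable. -/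
/-!
The information matrices `(P k)⁻¹ = (P 0)⁻¹ + ∑_{i<k} φᵢᵀφᵢ` increase in the Loewner order, and
the error is `θ k = P k (P k₀)⁻¹ θ k₀`. Matrix inversion is Loewner-antitone and the spectral norm
is Loewner-monotone on positive semidefinite matrices, so `‖P k‖ ≤ ‖P 0‖`, which gives the bound.
Persistent excitation makes the first `m (N + 1)` regressors contribute at least `m α I`, so
`‖P k‖ ≤ (⌊k / (N + 1)⌋ α)⁻¹ → 0`, and hence `θ k → 0`.
-/

open Matrix
open Finset Filter Topology
open scoped MatrixOrder RealInnerProductSpace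

theorem Finset.nsmul_le_sum_range_mul_of_le_sum_Icc {M : Type*} [AddCommMonoid M]
    [PartialOrder M] [IsOrderedAddMonoid M] {f : ℕ → M} {a : M} {N : ℕ}
    (h : ∀ j, a ≤ ∑ i ∈ Icc j (j + N), f i) (m : ℕ) :
    m • a ≤ ∑ i ∈ range (m * (N + 1)), f i := by
  induction m with
  | zero => simp
  | succ m ih =>
    have hblock : ∑ i ∈ range (N + 1), f (m * (N + 1) + i) =
        ∑ i ∈ Icc (m * (N + 1)) (m * (N + 1) + N), f i := by
      rw [← Ico_add_one_right_eq_Icc, sum_Ico_eq_sum_range, add_assoc, Nat.add_sub_cancel_left]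
    rw [succ_nsmul, add_one_mul, sum_range_add, hblock]
    exact add_le_add ih (h _)

theorem EuclideanSpace.norm_toLp_eq_sqrt_dotProduct {ι : Type*} [Fintype ι] (x : ι → ℝ) :
    ‖WithLp.toLp 2 x‖ = √(x ⬝ᵥ x) := by
  rw [norm_eq_sqrt_real_inner, EuclideanSpace.inner_toLp_toLp, star_trivial, dotProduct_comm]

theorem tendsto_zero_of_tendsto_sqrt_dotProduct_self {ι α : Type*} [Fintype ι] {l : Filter α}
    {x : α → ι → ℝ} (h : Tendsto (fun a => √(x a ⬝ᵥ x a)) l (𝓝 0)) : Tendsto x l (𝓝 0) := by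
  have hLp : Tendsto (fun a => WithLp.toLp 2 (x a)) l (𝓝 0) := by
    simpa [tendsto_zero_iff_norm_tendsto_zero, EuclideanSpace.norm_toLp_eq_sqrt_dotProduct] using h
  exact ((PiLp.continuous_ofLp 2 _).tendsto 0).comp hLp

namespace Matrix

theorem PosDef.of_le {ι : Type*} {A B : Matrix ι ι ℝ} (hA : A.PosDef) (hAB : A ≤ B) :
    B.PosDef := by
  simpa using hA.add_posSemidef (le_iff.mp hAB)

variable {ι : Type*} [Fintype ι] [DecidableEq ι]

theorem PosDef.inv_le_inv_of_le {A B : Matrix ι ι ℝ} (hA : A.PosDef) (hAB : A ≤ B) :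
    B⁻¹ ≤ A⁻¹ := by
  have hB := hA.of_le hAB
  refine .of_dotProduct_mulVec_nonneg (hA.inv.isHermitian.sub hB.inv.isHermitian) fun x => ?_
  set y := B⁻¹ *ᵥ x
  set z := A⁻¹ *ᵥ x
  have hy : B *ᵥ y = x := by simp [y, mulVec_mulVec, mul_nonsing_inv _ hB.det_pos.ne'.isUnit]
  have hz : A *ᵥ z = x := by simp [z, mulVec_mulVec, mul_nonsing_inv _ hA.det_pos.ne'.isUnit]
  have hzy : z ⬝ᵥ A *ᵥ y = x ⬝ᵥ y := by
    rw [dotProduct_mulVec, ← (isHermitian_iff_isSymm.mp hA.isHermitian).eq, vecMul_transpose, hz]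
  -- `xᵀ(A⁻¹ - B⁻¹)x = (y - z)ᵀA(y - z) + yᵀ(B - A)y`
  have hAyz := hA.posSemidef.dotProduct_mulVec_nonneg (y - z)
  have hBAy := (le_iff.mp hAB).dotProduct_mulVec_nonneg y
  simp only [star_trivial, sub_mulVec, mulVec_sub, dotProduct_sub, sub_dotProduct, hy, hz,
    hzy] at hAyz hBAy ⊢
  linarith [dotProduct_comm x y, dotProduct_comm x z]

theorem norm_toEuclideanCLM_le_of_le {A B : Matrix ι ι ℝ} (hA : 0 ≤ A) (hAB : A ≤ B) :
    ‖toEuclideanCLM (𝕜 := ℝ) A‖ ≤ ‖toEuclideanCLM (𝕜 := ℝ) B‖ := by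
  have hsymm : (toEuclideanCLM (𝕜 := ℝ) A).IsSymmetric :=
    isSymmetric_toEuclideanLin_iff.mpr hA.posSemidef.isHermitian
  rw [ContinuousLinearMap.norm_eq_iSup_rayleighQuotient _ hsymm]
  refine ciSup_le fun x => le_trans ?_ ((toEuclideanCLM (𝕜 := ℝ) B).rayleighQuotient_le_norm x)
  have hquad (M : Matrix ι ι ℝ) :
      (toEuclideanCLM (𝕜 := ℝ) M).reApplyInnerSelf x = x.ofLp ⬝ᵥ M *ᵥ x.ofLp := by
    rw [ContinuousLinearMap.reApplyInnerSelf_apply, RCLike.re_to_real, real_inner_comm,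
      inner_toEuclideanCLM]
  have hA_x := hA.posSemidef.dotProduct_mulVec_nonneg x.ofLp
  have hAB_x := (le_iff.mp hAB).dotProduct_mulVec_nonneg x.ofLp
  simp only [star_trivial, sub_mulVec, dotProduct_sub, sub_nonneg] at hA_x hAB_x
  simp only [ContinuousLinearMap.rayleighQuotient, hquad]
  rw [abs_of_nonneg (by positivity)]
  exact (div_le_div_of_nonneg_right hAB_x (by positivity)).trans (le_abs_self _)

theorem PosDef.norm_toEuclideanCLM_inv_le_of_le {A B : Matrix ι ι ℝ} (hA : A.PosDef)
    (hAB : A ≤ B) : ‖toEuclideanCLM (𝕜 := ℝ) B⁻¹‖ ≤ ‖toEuclideanCLM (𝕜 := ℝ) A⁻¹‖ :=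
  norm_toEuclideanCLM_le_of_le (hA.of_le hAB).inv.posSemidef.nonneg (hA.inv_le_inv_of_le hAB)

theorem norm_toEuclideanCLM_inv_le_of_smul_one_le {B : Matrix ι ι ℝ} {c : ℝ} (hc : 0 < c)
    (hcB : c • 1 ≤ B) : ‖toEuclideanCLM (𝕜 := ℝ) B⁻¹‖ ≤ c⁻¹ := by
  refine ((PosDef.one.smul hc).norm_toEuclideanCLM_inv_le_of_le hcB).trans ?_
  have hinv : (c • 1 : Matrix ι ι ℝ)⁻¹ = c⁻¹ • 1 :=
    inv_eq_right_inv (by simp [smul_smul, hc.ne'])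
  rw [hinv, map_smul, map_one, norm_smul, Real.norm_of_nonneg (inv_nonneg.mpr hc.le)]
  exact mul_le_of_le_one_right (inv_nonneg.mpr hc.le) ContinuousLinearMap.norm_id_le

theorem sqrt_dotProduct_mulVec_le (A : Matrix ι ι ℝ) (x : ι → ℝ) :
    √(A *ᵥ x ⬝ᵥ A *ᵥ x) ≤ ‖toEuclideanCLM (𝕜 := ℝ) A‖ * √(x ⬝ᵥ x) := by
  simpa [← EuclideanSpace.norm_toLp_eq_sqrt_dotProduct] using
    (toEuclideanCLM (𝕜 := ℝ) A).le_opNorm (WithLp.toLp 2 x)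

end Matrix

namespace RLS

variable {ι : Type*} [Fintype ι] [DecidableEq ι]

theorem inv_eq_inv_zero_add_sum {R : Type*} [CommRing R] {P G : ℕ → Matrix ι ι R}
    (hrec : ∀ k, (P (k + 1))⁻¹ = (P k)⁻¹ + G k) (k : ℕ) :
    (P k)⁻¹ = (P 0)⁻¹ + ∑ i ∈ range k, G i := by
  induction k with
  | zero => simp
  | succ k ih => rw [hrec, ih, sum_range_succ, add_assoc]

theorem error_eq_mulVec {R : Type*} [CommRing R] {P G : ℕ → Matrix ι ι R}
    (hP : ∀ k, IsUnit (P k).det) (hrec : ∀ k, (P (k + 1))⁻¹ = (P k)⁻¹ + G k)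
    {θ : ℕ → ι → R} (hθ : ∀ k, θ (k + 1) = (1 - P (k + 1) * G k) *ᵥ θ k) {k₀ k : ℕ}
    (hk : k₀ ≤ k) : θ k = (P k * (P k₀)⁻¹) *ᵥ θ k₀ := by
  induction k, hk using Nat.le_induction with
  | base => rw [mul_nonsing_inv _ (hP k₀), one_mulVec]
  | succ k _ ih =>
    have hstep : 1 - P (k + 1) * G k = P (k + 1) * (P k)⁻¹ := by
      rw [eq_sub_of_add_eq (hrec k).symm, Matrix.mul_sub, mul_nonsing_inv _ (hP (k + 1))]
    rw [hθ, hstep, ih, mulVec_mulVec, Matrix.mul_assoc, ← Matrix.mul_assoc (P k)⁻¹,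
      nonsing_inv_mul _ (hP k), Matrix.one_mul]

variable {P G : ℕ → Matrix ι ι ℝ}

theorem norm_le_norm_zero (hP : ∀ k, (P k).PosDef) (hG : ∀ k, 0 ≤ G k)
    (hrec : ∀ k, (P (k + 1))⁻¹ = (P k)⁻¹ + G k) (k : ℕ) :
    ‖toEuclideanCLM (𝕜 := ℝ) (P k)‖ ≤ ‖toEuclideanCLM (𝕜 := ℝ) (P 0)‖ := by
  have hle : (P 0)⁻¹ ≤ (P k)⁻¹ := by
    rw [inv_eq_inv_zero_add_sum hrec k]
    exact le_add_of_nonneg_right (sum_nonneg fun i _ => hG i)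
  simpa [nonsing_inv_nonsing_inv _ (hP _).det_pos.ne'.isUnit] using
    (hP 0).inv.norm_toEuclideanCLM_inv_le_of_le hle

theorem smul_one_le_inv (hP : ∀ k, (P k).PosDef) (hG : ∀ k, 0 ≤ G k)
    (hrec : ∀ k, (P (k + 1))⁻¹ = (P k)⁻¹ + G k) {N : ℕ} {α : ℝ}
    (hPE : ∀ j, α • 1 ≤ ∑ i ∈ Icc j (j + N), G i) (k : ℕ) :
    (((k / (N + 1) : ℕ) : ℝ) * α) • 1 ≤ (P k)⁻¹ := by
  calc (((k / (N + 1) : ℕ) : ℝ) * α) • (1 : Matrix ι ι ℝ)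
      = (k / (N + 1)) • α • 1 := by rw [mul_smul, Nat.cast_smul_eq_nsmul]
    _ ≤ ∑ i ∈ range (k / (N + 1) * (N + 1)), G i := nsmul_le_sum_range_mul_of_le_sum_Icc hPE _
    _ ≤ ∑ i ∈ range k, G i :=
      sum_le_sum_of_subset_of_nonneg (range_subset_range.mpr (Nat.div_mul_le_self k (N + 1)))
        fun i _ _ => hG i
    _ ≤ (P k)⁻¹ := by
      rw [inv_eq_inv_zero_add_sum hrec k]
      exact le_add_of_nonneg_left (hP 0).inv.posSemidef.nonneg

theorem tendsto_norm_zero (hP : ∀ k, (P k).PosDef) (hG : ∀ k, 0 ≤ G k)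
    (hrec : ∀ k, (P (k + 1))⁻¹ = (P k)⁻¹ + G k) {N : ℕ} {α : ℝ} (hα : 0 < α)
    (hPE : ∀ j, α • 1 ≤ ∑ i ∈ Icc j (j + N), G i) :
    Tendsto (fun k => ‖toEuclideanCLM (𝕜 := ℝ) (P k)‖) atTop (𝓝 0) := by
  have hdiv : Tendsto (fun k => ((k / (N + 1) : ℕ) : ℝ)) atTop atTop :=
    tendsto_natCast_atTop_atTop.comp (Nat.tendsto_div_const_atTop N.succ_ne_zero)
  have hm : Tendsto (fun k => ((k / (N + 1) : ℕ) : ℝ) * α) atTop atTop := hdiv.atTop_mul_const hα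
  refine squeeze_zero' (Eventually.of_forall fun _ => norm_nonneg _) ?_
    (tendsto_inv_atTop_zero.comp hm)
  filter_upwards [hm.eventually_gt_atTop 0] with k hk
  simpa [nonsing_inv_nonsing_inv _ (hP k).det_pos.ne'.isUnit] using
    norm_toEuclideanCLM_inv_le_of_smul_one_le hk (smul_one_le_inv hP hG hrec hPE k)

end RLS

theorem stmt11_general {n p : ℕ} (N : ℕ) (α β : ℝ) (hα : 0 < α)
    (φ : ℕ → Matrix (Fin p) (Fin n) ℝ)
    (hPE : ∀ j : ℕ,
      ((∑ i ∈ Finset.Icc j (j + N), (φ i)ᵀ * φ i) -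
        α • (1 : Matrix (Fin n) (Fin n) ℝ)).PosSemidef ∧
      (β • (1 : Matrix (Fin n) (Fin n) ℝ) -
        ∑ i ∈ Finset.Icc j (j + N), (φ i)ᵀ * φ i).PosSemidef)
    (P : ℕ → Matrix (Fin n) (Fin n) ℝ) (hPk : ∀ k, (P k).PosDef)
    (hrec : ∀ k, (P (k + 1))⁻¹ = (P k)⁻¹ + (φ k)ᵀ * φ k)
    (θt : ℕ → (Fin n → ℝ))
    (hdyn : ∀ k, θt (k + 1) =
      ((1 : Matrix (Fin n) (Fin n) ℝ) - P (k + 1) * (φ k)ᵀ * φ k) *ᵥ θt k) :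
    Filter.Tendsto θt Filter.atTop (nhds 0) ∧
    ∀ k₀ k, k₀ ≤ k →
      Real.sqrt (θt k ⬝ᵥ θt k) ≤
        ‖Matrix.toEuclideanCLM (𝕜 := ℝ) (P 0)‖ *
          ‖Matrix.toEuclideanCLM (𝕜 := ℝ) ((P k₀)⁻¹)‖ *
          Real.sqrt (θt k₀ ⬝ᵥ θt k₀) := by
  have hG (k : ℕ) : 0 ≤ (φ k)ᵀ * φ k := by
    simpa using (posSemidef_conjTranspose_mul_self (φ k)).nonneg
  have hθ (k₀ k : ℕ) (hk : k₀ ≤ k) : θt k = P k *ᵥ (P k₀)⁻¹ *ᵥ θt k₀ := by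
    rw [mulVec_mulVec]
    exact RLS.error_eq_mulVec (fun k => (hPk k).det_pos.ne'.isUnit) hrec
      (fun k => by rw [hdyn, Matrix.mul_assoc]) hk
  have hbound (k₀ k : ℕ) (hk : k₀ ≤ k) : √(θt k ⬝ᵥ θt k) ≤
      ‖toEuclideanCLM (𝕜 := ℝ) (P k)‖ * ‖toEuclideanCLM (𝕜 := ℝ) (P k₀)⁻¹‖ *
        √(θt k₀ ⬝ᵥ θt k₀) := by
    rw [hθ k₀ k hk, mul_assoc]
    exact (sqrt_dotProduct_mulVec_le _ _).trans (by gcongr; exact sqrt_dotProduct_mulVec_le _ _)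
  refine ⟨tendsto_zero_of_tendsto_sqrt_dotProduct_self ?_, fun k₀ k hk => ?_⟩
  · refine squeeze_zero (fun _ => Real.sqrt_nonneg _) (fun k => hbound 0 k k.zero_le) ?_
    have hdecay := RLS.tendsto_norm_zero hPk hG hrec hα fun j => (hPE j).1
    simpa using (hdecay.mul_const _).mul_const _
  · refine (hbound k₀ k hk).trans ?_
    gcongr
    exact RLS.norm_le_norm_zero hPk hG hrec k

theorem stmt11 {n p : ℕ} (N : ℕ) (α β : ℝ) (hα : 0 < α) (hβ : 0 < β)
    (hN : (n : ℝ) ≤ (N : ℝ) * (p : ℝ))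
    (φ : ℕ → Matrix (Fin p) (Fin n) ℝ)
    (hPE : ∀ j : ℕ,
      ((∑ i ∈ Finset.Icc j (j + N), (φ i)ᵀ * φ i) -
        α • (1 : Matrix (Fin n) (Fin n) ℝ)).PosSemidef ∧
      (β • (1 : Matrix (Fin n) (Fin n) ℝ) -
        ∑ i ∈ Finset.Icc j (j + N), (φ i)ᵀ * φ i).PosSemidef)
    (R : Matrix (Fin n) (Fin n) ℝ) (hR : R.PosDef)
    (P : ℕ → Matrix (Fin n) (Fin n) ℝ) (hP0 : P 0 = R⁻¹) (hPk : ∀ k, (P k).PosDef)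
    (hrec : ∀ k, (P (k + 1))⁻¹ = (P k)⁻¹ + (φ k)ᵀ * φ k)
    (θt : ℕ → (Fin n → ℝ))
    (hdyn : ∀ k, θt (k + 1) =
      ((1 : Matrix (Fin n) (Fin n) ℝ) - P (k + 1) * (φ k)ᵀ * φ k) *ᵥ θt k) :
    Filter.Tendsto θt Filter.atTop (nhds 0) ∧
    ∀ k₀ k, k₀ ≤ k →
      Real.sqrt (θt k ⬝ᵥ θt k) ≤
        ‖Matrix.toEuclideanCLM (𝕜 := ℝ) (P 0)‖ *
          ‖Matrix.toEuclideanCLM (𝕜 := ℝ) ((P k₀)⁻¹)‖ *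
          Real.sqrt (θt k₀ ⬝ᵥ θt k₀) :=
  stmt11_general N α β hα φ hPE P hPk hrec θt hdyn
end

section
/- Let P_0 ∈ ℝ^{n×n} be positive definite, let λ ∈ (0,1], let (φ_k)_{k=0}^∞ ⊂ ℝ^{p×n}, and let (P_k)_{k=0}^∞ satisfy the RLS covariance recursion P_{k+1}^{-1} = λ P_k^{-1} + φ_k^T φ_k. Then for every k ≥ 0, all eigenvalues of the matrix P_{k+1} φ_k^T φ_k are real and contained in the interval [0, 1]. -/
/-!
Write `Q = P (k + 1)` and `A = φₖᵀ φₖ`. The recursion says `Q⁻¹ - A = λ P(k)⁻¹`, so `0 ≤ A ≤ Q⁻¹` in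
the Loewner order. If `Q A v = μ v` with `v ≠ 0`, then `A v = μ Q⁻¹ v`, and pairing with `v` gives
`v* A v = μ (v* Q⁻¹ v)` and `v* (Q⁻¹ - A) v = (1 - μ) (v* Q⁻¹ v)` with `v* Q⁻¹ v > 0`; the two
quadratic forms are nonnegative, hence `μ` is real and `0 ≤ μ ≤ 1`.
-/

open Matrix
open scoped ComplexOrder MatrixOrder

namespace Matrix

theorem exists_mulVec_eq_smul_of_mem_spectrum {ι K : Type*} [Fintype ι] [DecidableEq ι] [Field K]
    {M : Matrix ι ι K} {μ : K} (h : μ ∈ spectrum K M) : ∃ v ≠ 0, M *ᵥ v = μ • v := by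
  rw [← spectrum_toLin', ← Module.End.hasEigenvalue_iff_mem_spectrum] at h
  obtain ⟨v, hv⟩ := h.exists_hasEigenvector
  exact ⟨v, hv.2, by simpa using hv.apply_eq_smul⟩

variable {𝕜 ι : Type*} [RCLike 𝕜] [Fintype ι] [DecidableEq ι]

theorem PosDef.mem_Icc_of_mem_spectrum_mul {Q A : Matrix ι ι 𝕜} (hQ : Q.PosDef) (hA : 0 ≤ A)
    (hAQ : A ≤ Q⁻¹) {μ : 𝕜} (hμ : μ ∈ spectrum 𝕜 (Q * A)) : μ ∈ Set.Icc 0 1 := by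
  obtain ⟨v, hv, hQAv⟩ := exists_mulVec_eq_smul_of_mem_spectrum hμ
  have hAv : A *ᵥ v = μ • (Q⁻¹ *ᵥ v) := by
    rw [← mulVec_smul, ← hQAv, mulVec_mulVec, ← Matrix.mul_assoc,
      nonsing_inv_mul Q ((isUnit_iff_isUnit_det Q).mp hQ.isUnit), Matrix.one_mul]
  set c := star v ⬝ᵥ (Q⁻¹ *ᵥ v)
  have hc : 0 < c := hQ.inv.dotProduct_mulVec_pos hv
  have nonneg_of_mul_c : ∀ z, 0 ≤ z * c → 0 ≤ z := fun z hz => by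
    simpa [mul_assoc, hc.ne'] using mul_nonneg hz (Right.inv_pos.mpr hc).le
  have hμc : 0 ≤ μ * c := by
    simpa [hAv, dotProduct_smul] using hA.posSemidef.dotProduct_mulVec_nonneg v
  have hμc' : 0 ≤ (1 - μ) * c := by
    simpa [sub_mulVec, hAv, dotProduct_smul, sub_mul] using
      (le_iff.mp hAQ).dotProduct_mulVec_nonneg v
  exact ⟨nonneg_of_mul_c μ hμc, sub_nonneg.mp (nonneg_of_mul_c _ hμc')⟩

theorem PosSemidef.map_algebraMap {M : Matrix ι ι ℝ} (hM : M.PosSemidef) :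
    (M.map (algebraMap ℝ 𝕜)).PosSemidef := by
  obtain ⟨B, rfl⟩ := CStarAlgebra.nonneg_iff_eq_star_mul_self.mp hM.nonneg
  rw [Matrix.map_mul, star_eq_conjTranspose,
    conjTranspose_map _ fun r => (RCLike.conj_ofReal r).symm]
  exact posSemidef_conjTranspose_mul_self _

theorem PosDef.map_algebraMap {M : Matrix ι ι ℝ} (hM : M.PosDef) :
    (M.map (algebraMap ℝ 𝕜)).PosDef :=
  hM.posSemidef.map_algebraMap.posDef_iff_isUnit.mpr (hM.isUnit.map (algebraMap ℝ 𝕜).mapMatrix)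

theorem map_algebraMap_mono {A B : Matrix ι ι ℝ} (h : A ≤ B) :
    A.map (algebraMap ℝ 𝕜) ≤ B.map (algebraMap ℝ 𝕜) := by
  rw [le_iff, ← Matrix.map_sub _ (map_sub _)]
  exact (le_iff.mp h).map_algebraMap

theorem inv_map_algebraMap {M : Matrix ι ι ℝ} (hM : IsUnit M) :
    (M.map (algebraMap ℝ 𝕜))⁻¹ = M⁻¹.map (algebraMap ℝ 𝕜) :=
  inv_eq_left_inv <| by
    rw [← Matrix.map_mul, nonsing_inv_mul _ ((isUnit_iff_isUnit_det M).mp hM),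
      Matrix.map_one _ (map_zero _) (map_one _)]

theorem PosDef.mem_Icc_of_mem_spectrum_map_mul {Q A : Matrix ι ι ℝ} (hQ : Q.PosDef) (hA : 0 ≤ A)
    (hAQ : A ≤ Q⁻¹) {μ : 𝕜} (hμ : μ ∈ spectrum 𝕜 ((Q * A).map (algebraMap ℝ 𝕜))) :
    μ ∈ Set.Icc 0 1 := by
  rw [Matrix.map_mul] at hμ
  refine hQ.map_algebraMap.mem_Icc_of_mem_spectrum_mul ?_ ?_ hμ
  · simpa using map_algebraMap_mono (𝕜 := 𝕜) hA
  · simpa [inv_map_algebraMap hQ.isUnit] using map_algebraMap_mono (𝕜 := 𝕜) hAQ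

end Matrix

theorem stmt12_general {n p : ℕ}
    (P : ℕ → Matrix (Fin n) (Fin n) ℝ) (hPk : ∀ k, (P k).PosDef)
    (lam : ℝ) (hlam : lam ∈ Set.Ioc (0 : ℝ) 1)
    (φ : ℕ → Matrix (Fin p) (Fin n) ℝ)
    (hrec : ∀ k, (P (k + 1))⁻¹ = lam • (P k)⁻¹ + (φ k)ᵀ * φ k) :
    ∀ k, ∀ μ : ℂ,
      μ ∈ spectrum ℂ ((P (k + 1) * (φ k)ᵀ * φ k).map (algebraMap ℝ ℂ)) →
        μ.im = 0 ∧ 0 ≤ μ.re ∧ μ.re ≤ 1 := by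
  intro k μ hμ
  have hA : 0 ≤ (φ k)ᵀ * φ k := by
    simpa using (posSemidef_conjTranspose_mul_self (φ k)).nonneg
  have hAQ : (φ k)ᵀ * φ k ≤ (P (k + 1))⁻¹ := by
    rw [le_iff, hrec k, add_sub_cancel_right]
    exact (hPk k).inv.posSemidef.smul hlam.1.le
  rw [Matrix.mul_assoc] at hμ
  obtain ⟨hμ0, hμ1⟩ := (hPk (k + 1)).mem_Icc_of_mem_spectrum_map_mul hA hAQ hμ
  obtain ⟨hre0, him⟩ := Complex.le_def.mp hμ0
  exact ⟨him.symm, hre0, (Complex.le_def.mp hμ1).1⟩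

theorem stmt12 {n p : ℕ}
    (P : ℕ → Matrix (Fin n) (Fin n) ℝ) (hP0 : (P 0).PosDef) (hPk : ∀ k, (P k).PosDef)
    (lam : ℝ) (hlam : lam ∈ Set.Ioc (0 : ℝ) 1)
    (φ : ℕ → Matrix (Fin p) (Fin n) ℝ)
    (hrec : ∀ k, (P (k + 1))⁻¹ = lam • (P k)⁻¹ + (φ k)ᵀ * φ k) :
    ∀ k, ∀ μ : ℂ,
      μ ∈ spectrum ℂ ((P (k + 1) * (φ k)ᵀ * φ k).map (algebraMap ℝ ℂ)) →
        μ.im = 0 ∧ 0 ≤ μ.re ∧ μ.re ≤ 1 :=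
  stmt12_general P hPk lam hlam φ hrec
end

section
/- Let P_0 ∈ ℝ^{n×n} be positive definite, let λ ∈ (0,1], let (φ_k)_{k=0}^∞ ⊂ ℝ^{p×n} be persistently exciting, and let (P_k)_{k=0}^∞ satisfy the RLS covariance recursion P_{k+1}^{-1} = λ P_k^{-1} + φ_k^T φ_k. Define the ordered product 𝒜_k := (I_n − P_{k+1} φ_k^T φ_k)(I_n − P_k φ_{k−1}^T φ_{k−1}) ⋯ (I_n − P_1 φ_0^T φ_0). Then 𝒜_k → 0 as k → ∞. -/
/-!
Each factor telescopes: since `P_{k+1}⁻¹ - φ_kᵀ φ_k = λ P_k⁻¹`, it equals `λ P_{k+1} P_k⁻¹`, so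
`𝒜_k = λ^{k+1} P_{k+1} P_0⁻¹` and it suffices that `λ^k P_k → 0`. The inverse `λ^{-k} P_k⁻¹` of this
matrix dominates `∑_{i<k} φ_iᵀ φ_i` in the Loewner order, because forgetting only rescales the
term `φ_iᵀ φ_i` by `λ^{-(k-i)} ≥ 1`, and persistent excitation bounds that sum below by
`⌊k/(N+1)⌋ α I`. Hence the operator norm of `λ^k P_k` is at most `(⌊k/(N+1)⌋ α)⁻¹ → 0`.
-/

open Matrix Filter Finset
open scoped MatrixOrder Topology RealInnerProductSpace

section OrderedModule

variable {M : Type*} [AddCommGroup M] [PartialOrder M] [IsOrderedAddMonoid M]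

theorem nsmul_le_sum_range_of_le_sum_Icc {f : ℕ → M} (hf : ∀ i, 0 ≤ f i) {a : M} {N : ℕ}
    (hwin : ∀ j, a ≤ ∑ i ∈ Icc j (j + N), f i) (k : ℕ) :
    (k / (N + 1)) • a ≤ ∑ i ∈ range k, f i := by
  have hblocks : ∀ m, m • a ≤ ∑ i ∈ range (m * (N + 1)), f i := by
    intro m
    induction m with
    | zero => simp
    | succ m ih =>
      have hsplit : ∑ i ∈ range ((m + 1) * (N + 1)), f i =
          ∑ i ∈ range (m * (N + 1)), f i + ∑ i ∈ Icc (m * (N + 1)) (m * (N + 1) + N), f i := by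
        rw [show (m + 1) * (N + 1) = m * (N + 1) + N + 1 by ring, range_eq_Ico, range_eq_Ico,
          ← Ico_add_one_right_eq_Icc, sum_Ico_consecutive _ (Nat.zero_le _) (by omega)]
      rw [hsplit, succ_nsmul]
      exact add_le_add ih (hwin _)
  calc (k / (N + 1)) • a ≤ ∑ i ∈ range (k / (N + 1) * (N + 1)), f i := hblocks _
    _ ≤ ∑ i ∈ range k, f i :=
      sum_le_sum_of_subset_of_nonneg (range_subset_range.mpr (Nat.div_mul_le_self k (N + 1)))
        fun i _ _ => hf i

variable [Module ℝ M] [PosSMulMono ℝ M]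

theorem sum_range_le_inv_pow_smul_of_eq_smul_add {lam : ℝ} (hlam0 : 0 < lam) (hlam1 : lam ≤ 1)
    {Q G : ℕ → M} (hQ0 : 0 ≤ Q 0) (hG : ∀ k, 0 ≤ G k) (hrec : ∀ k, Q (k + 1) = lam • Q k + G k)
    (k : ℕ) : ∑ i ∈ range k, G i ≤ lam⁻¹ ^ k • Q k := by
  induction k with
  | zero => simpa using hQ0
  | succ k ih =>
    have hG_le : G k ≤ lam⁻¹ ^ (k + 1) • G k :=
      le_smul_of_one_le_left (hG k) (one_le_pow₀ ((one_le_inv₀ hlam0).mpr hlam1))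
    calc ∑ i ∈ range (k + 1), G i ≤ lam⁻¹ ^ k • Q k + lam⁻¹ ^ (k + 1) • G k := by
          rw [sum_range_succ]
          exact add_le_add ih hG_le
      _ = lam⁻¹ ^ (k + 1) • Q (k + 1) := by
          rw [hrec, smul_add, smul_smul, pow_succ, mul_assoc, inv_mul_cancel₀ hlam0.ne', mul_one]

end OrderedModule

theorem mul_norm_le_of_mul_norm_sq_le_inner {E : Type*} [NormedAddCommGroup E]
    [InnerProductSpace ℝ E] {x y : E} {c : ℝ} (h : c * ‖y‖ ^ 2 ≤ ⟪y, x⟫) : c * ‖y‖ ≤ ‖x‖ := by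
  rcases (norm_nonneg y).eq_or_lt with hy | hy
  · rw [← hy, mul_zero]
    exact norm_nonneg x
  · refine le_of_mul_le_mul_right ?_ hy
    calc c * ‖y‖ * ‖y‖ = c * ‖y‖ ^ 2 := by ring
      _ ≤ ⟪y, x⟫ := h
      _ ≤ ‖y‖ * ‖x‖ := real_inner_le_norm y x
      _ = ‖x‖ * ‖y‖ := mul_comm _ _

namespace Matrix

variable {ι : Type*} [Fintype ι] [DecidableEq ι]

open scoped Matrix.Norms.L2Operator in
theorem l2_opNorm_le_inv_of_smul_one_le {A S : Matrix ι ι ℝ} (hSA : S * A = 1) {c : ℝ}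
    (hc : 0 < c) (h : c • 1 ≤ S) : ‖A‖ ≤ c⁻¹ := by
  rw [← l2_opNorm_toEuclideanCLM]
  refine ContinuousLinearMap.opNorm_le_bound _ (inv_nonneg.mpr hc.le) fun x => ?_
  set y := toEuclideanCLM (𝕜 := ℝ) A x
  have hSy : toEuclideanCLM (𝕜 := ℝ) S y = x := by
    apply WithLp.ofLp_injective
    rw [ofLp_toEuclideanCLM, ofLp_toEuclideanCLM, mulVec_mulVec, hSA, one_mulVec]
  have hquad : c * ‖y‖ ^ 2 ≤ ⟪y, x⟫ := by
    have := (le_iff.mp h).dotProduct_mulVec_nonneg y.ofLp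
    rw [star_trivial, ← inner_toEuclideanCLM, map_sub, map_smul, map_one,
      _root_.sub_apply, inner_sub_right, hSy] at this
    simpa [real_inner_smul_right, real_inner_self_eq_norm_sq] using this
  rw [inv_mul_eq_div, le_div_iff₀' hc]
  exact mul_norm_le_of_mul_norm_sq_le_inner hquad

open scoped Matrix.Norms.L2Operator in
theorem tendsto_zero_of_smul_one_le {α : Type*} {l : Filter α} {R S : α → Matrix ι ι ℝ}
    (hSR : ∀ a, S a * R a = 1) {c : α → ℝ} (hc : Tendsto c l atTop) (h : ∀ a, c a • 1 ≤ S a) :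
    Tendsto R l (𝓝 0) := by
  refine squeeze_zero_norm' ?_ hc.inv_tendsto_atTop
  filter_upwards [hc.eventually_gt_atTop 0] with a ha
  exact l2_opNorm_le_inv_of_smul_one_le (hSR a) ha (h a)

end Matrix

namespace RLS

variable {ι : Type*} [Fintype ι] [DecidableEq ι]

theorem one_sub_mul_eq_smul_mul_inv {P P' G : Matrix ι ι ℝ} {lam : ℝ} (hP' : IsUnit P'.det)
    (hrec : P'⁻¹ = lam • P⁻¹ + G) : 1 - P' * G = lam • (P' * P⁻¹) :=
  calc 1 - P' * G = P' * (P'⁻¹ - G) := by rw [Matrix.mul_sub, mul_nonsing_inv _ hP']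
    _ = lam • (P' * P⁻¹) := by rw [hrec, add_sub_cancel_right, Matrix.mul_smul]

theorem transition_prod_eq_pow_smul_mul_inv {P G A : ℕ → Matrix ι ι ℝ} {lam : ℝ} (hP : ∀ k, IsUnit (P k).det)
    (hrec : ∀ k, (P (k + 1))⁻¹ = lam • (P k)⁻¹ + G k) (hA0 : A 0 = 1 - P 1 * G 0)
    (hArec : ∀ k, A (k + 1) = (1 - P (k + 2) * G (k + 1)) * A k) (k : ℕ) :
    A k = (lam ^ (k + 1) • P (k + 1)) * (P 0)⁻¹ := by
  induction k with
  | zero => rw [hA0, one_sub_mul_eq_smul_mul_inv (hP 1) (hrec 0), zero_add, pow_one, smul_mul_assoc]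
  | succ k ih =>
    rw [hArec, ih, one_sub_mul_eq_smul_mul_inv (hP (k + 2)) (hrec (k + 1)), smul_mul_assoc,
      smul_mul_assoc, mul_smul_comm, smul_smul, ← pow_succ', smul_mul_assoc]
    congr 1
    rw [Matrix.mul_assoc, ← Matrix.mul_assoc (P (k + 1))⁻¹, nonsing_inv_mul _ (hP (k + 1)),
      Matrix.one_mul]

end RLS

theorem stmt13_general {n p : ℕ}
    (P : ℕ → Matrix (Fin n) (Fin n) ℝ) (hPk : ∀ k, (P k).PosDef)
    (lam : ℝ) (hlam : lam ∈ Set.Ioc (0 : ℝ) 1)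
    (N : ℕ) (α β : ℝ) (hα : 0 < α)
    (φ : ℕ → Matrix (Fin p) (Fin n) ℝ)
    (hPE : ∀ j : ℕ,
      ((∑ i ∈ Finset.Icc j (j + N), (φ i)ᵀ * φ i) -
        α • (1 : Matrix (Fin n) (Fin n) ℝ)).PosSemidef ∧
      (β • (1 : Matrix (Fin n) (Fin n) ℝ) -
        ∑ i ∈ Finset.Icc j (j + N), (φ i)ᵀ * φ i).PosSemidef)
    (hrec : ∀ k, (P (k + 1))⁻¹ = lam • (P k)⁻¹ + (φ k)ᵀ * φ k)
    (A : ℕ → Matrix (Fin n) (Fin n) ℝ)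
    (hA0 : A 0 = (1 : Matrix (Fin n) (Fin n) ℝ) - P 1 * (φ 0)ᵀ * φ 0)
    (hArec : ∀ k, A (k + 1) =
      ((1 : Matrix (Fin n) (Fin n) ℝ) - P (k + 2) * (φ (k + 1))ᵀ * φ (k + 1)) * A k) :
    Filter.Tendsto A Filter.atTop (nhds 0) := by
  obtain ⟨hlam0, hlam1⟩ := hlam
  have hP k : IsUnit (P k).det := (hPk k).isUnit.map detMonoidHom
  have hφ k : 0 ≤ (φ k)ᵀ * φ k := (posSemidef_conjTranspose_mul_self (φ k)).nonneg
  have hinfo k : ((k / (N + 1) : ℕ) * α) • (1 : Matrix (Fin n) (Fin n) ℝ) ≤ lam⁻¹ ^ k • (P k)⁻¹ :=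
    calc ((k / (N + 1) : ℕ) * α) • (1 : Matrix (Fin n) (Fin n) ℝ)
        = (k / (N + 1)) • (α • 1) := by rw [mul_smul, Nat.cast_smul_eq_nsmul]
      _ ≤ ∑ i ∈ range k, (φ i)ᵀ * φ i :=
        nsmul_le_sum_range_of_le_sum_Icc hφ (fun j => (hPE j).1) k
      _ ≤ lam⁻¹ ^ k • (P k)⁻¹ :=
        sum_range_le_inv_pow_smul_of_eq_smul_add (Q := fun k => (P k)⁻¹) hlam0 hlam1
          (hPk 0).inv.posSemidef.nonneg hφ hrec k
  have hinv k : (lam⁻¹ ^ k • (P k)⁻¹) * (lam ^ k • P k) = 1 := by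
    rw [smul_mul_smul_comm, ← mul_pow, inv_mul_cancel₀ hlam0.ne', one_pow, one_smul,
      nonsing_inv_mul _ (hP k)]
  have hscaled : Tendsto (fun k => lam ^ k • P k) atTop (𝓝 0) :=
    tendsto_zero_of_smul_one_le hinv ((tendsto_natCast_atTop_atTop.comp
      (Nat.tendsto_div_const_atTop N.succ_ne_zero)).atTop_mul_const hα) hinfo
  simp only [Matrix.mul_assoc] at hA0 hArec
  rw [funext (RLS.transition_prod_eq_pow_smul_mul_inv hP hrec hA0 hArec), ← zero_mul (P 0)⁻¹]
  exact (hscaled.comp (tendsto_add_atTop_nat 1)).mul_const _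

theorem stmt13 {n p : ℕ}
    (P : ℕ → Matrix (Fin n) (Fin n) ℝ) (hP0 : (P 0).PosDef) (hPk : ∀ k, (P k).PosDef)
    (lam : ℝ) (hlam : lam ∈ Set.Ioc (0 : ℝ) 1)
    (N : ℕ) (α β : ℝ) (hα : 0 < α) (hβ : 0 < β)
    (hN : (n : ℝ) ≤ (N : ℝ) * (p : ℝ))
    (φ : ℕ → Matrix (Fin p) (Fin n) ℝ)
    (hPE : ∀ j : ℕ,
      ((∑ i ∈ Finset.Icc j (j + N), (φ i)ᵀ * φ i) -
        α • (1 : Matrix (Fin n) (Fin n) ℝ)).PosSemidef ∧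
      (β • (1 : Matrix (Fin n) (Fin n) ℝ) -
        ∑ i ∈ Finset.Icc j (j + N), (φ i)ᵀ * φ i).PosSemidef)
    (hrec : ∀ k, (P (k + 1))⁻¹ = lam • (P k)⁻¹ + (φ k)ᵀ * φ k)
    (A : ℕ → Matrix (Fin n) (Fin n) ℝ)
    (hA0 : A 0 = (1 : Matrix (Fin n) (Fin n) ℝ) - P 1 * (φ 0)ᵀ * φ 0)
    (hArec : ∀ k, A (k + 1) =
      ((1 : Matrix (Fin n) (Fin n) ℝ) - P (k + 2) * (φ (k + 1))ᵀ * φ (k + 1)) * A k) :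
    Filter.Tendsto A Filter.atTop (nhds 0) :=
  stmt13_general P hPk lam hlam N α β hα φ hPE hrec A hA0 hArec
end
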